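/- arXiv:2402.07013 — 17 statements merged into one kernel-verified Lean document; each statement's English description precedes it below -/
import Mathlib

section
/- Let G be a connected graph and f=(V₀,V₁,V₂,V₃) a maximal double Roman dominating function of G of minimum weight with V₃ ≠ ∅. Then every vertex of V₃ has a private neighbor in V₀ with respect to V₂ ∪ V₃, i.e., for each v ∈ V₃ there exists a vertex x with f(x)=0 adjacent to v such that v is the only neighbor of x in V₂ ∪ V₃. -/
open Finset

/-- A set `S` dominates `G`: every vertex outside `S` has a neighbor in `S`. -/
def IsDomSet {V : Type*} (G : SimpleGraph V) (S : Set V) : Prop :=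
  ∀ v ∉ S, ∃ u ∈ S, G.Adj v u

/-- A maximal dominating set: dominating, and its complement is not dominating. -/
def IsMaxDomSet {V : Type*} (G : SimpleGraph V) (S : Set V) : Prop :=
  IsDomSet G S ∧ ¬ IsDomSet G Sᶜ

/-- Double Roman dominating function. -/
def IsDRDF {V : Type*} (G : SimpleGraph V) (f : V → ℕ) : Prop :=
  (∀ v, f v ≤ 3) ∧
  (∀ v, f v = 0 → (∃ u, G.Adj v u ∧ f u = 3) ∨
      ∃ u w, u ≠ w ∧ G.Adj v u ∧ G.Adj v w ∧ f u = 2 ∧ f w = 2) ∧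
  (∀ v, f v = 1 → ∃ u, G.Adj v u ∧ (f u = 2 ∨ f u = 3))

/-- Maximal double Roman dominating function: a DRDF whose 0-set is not dominating. -/
def IsMDRDF {V : Type*} (G : SimpleGraph V) (f : V → ℕ) : Prop :=
  IsDRDF G f ∧ ¬ IsDomSet G {v | f v = 0}

/-- Roman dominating function. -/
def IsRDF {V : Type*} (G : SimpleGraph V) (f : V → ℕ) : Prop :=
  (∀ v, f v ≤ 2) ∧ ∀ v, f v = 0 → ∃ u, G.Adj v u ∧ f u = 2

/-- Maximal Roman dominating function. -/
def IsMRDF {V : Type*} (G : SimpleGraph V) (f : V → ℕ) : Prop :=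
  IsRDF G f ∧ ¬ IsDomSet G {v | f v = 0}

/-- Double Roman domination number. -/
noncomputable def drdNum {V : Type*} [Fintype V] (G : SimpleGraph V) : ℕ :=
  sInf {w | ∃ f, IsDRDF G f ∧ ∑ v, f v = w}

/-- Maximal double Roman domination number. -/
noncomputable def mdrdNum {V : Type*} [Fintype V] (G : SimpleGraph V) : ℕ :=
  sInf {w | ∃ f, IsMDRDF G f ∧ ∑ v, f v = w}

/-- Maximal Roman domination number. -/
noncomputable def mRomanNum {V : Type*} [Fintype V] (G : SimpleGraph V) : ℕ :=
  sInf {w | ∃ f, IsMRDF G f ∧ ∑ v, f v = w}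

/-- Maximal domination number. -/
noncomputable def maxDomNum {V : Type*} [Fintype V] (G : SimpleGraph V) : ℕ :=
  sInf {k | ∃ S : Set V, IsMaxDomSet G S ∧ S.ncard = k}

theorem stmt1 {V : Type*} [Fintype V] (G : SimpleGraph V) (hG : G.Connected)
    (f : V → ℕ) (hf : IsMDRDF G f) (hmin : ∑ v, f v = mdrdNum G)
    (h3 : ∃ v, f v = 3) :
    ∀ v, f v = 3 → ∃ x, f x = 0 ∧ G.Adj v x ∧
      ∀ u, G.Adj x u → (f u = 2 ∨ f u = 3) → u = v := by
  intro v hv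
  by_contra hcon
  push_neg at hcon
  classical
  -- hcon : ∀ x, f x = 0 → G.Adj v x → ∃ u, G.Adj x u ∧ (f u = 2 ∨ f u = 3) ∧ u ≠ v
  set g := Function.update f v 2 with hg
  have hgv : g v = 2 := Function.update_self v 2 f
  have hgx : ∀ x, x ≠ v → g x = f x := fun x hx => Function.update_of_ne hx 2 f
  have hzero : ∀ x, g x = 0 ↔ f x = 0 := by
    intro x
    by_cases h : x = v
    · subst h; rw [hgv, hv]; omega
    · rw [hgx x h]
  obtain ⟨⟨hb, h0, h1⟩, hnd⟩ := hf
  have hDRDF : IsDRDF G g := by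
    refine ⟨?_, ?_, ?_⟩
    · intro x
      by_cases h : x = v
      · subst h; rw [hgv]; omega
      · rw [hgx x h]; exact hb x
    · intro x hx
      have hxv : x ≠ v := by intro h; subst h; rw [hgv] at hx; omega
      have hfx : f x = 0 := (hzero x).mp hx
      rcases h0 x hfx with ⟨u, hadj, hu3⟩ | ⟨u, w, huw, hau, haw, hu2, hw2⟩
      · by_cases huv : u = v
        · rw [huv] at hadj
          obtain ⟨w, haw, hw23, hwv⟩ := hcon x hfx hadj.symm
          rcases hw23 with hw2 | hw3
          · exact Or.inr ⟨w, v, hwv, haw, hadj, by rw [hgx w hwv]; exact hw2, hgv⟩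
          · exact Or.inl ⟨w, haw, by rw [hgx w hwv]; exact hw3⟩
        · exact Or.inl ⟨u, hadj, by rw [hgx u huv]; exact hu3⟩
      · have huv : u ≠ v := by intro h; subst h; omega
        have hwv : w ≠ v := by intro h; subst h; omega
        exact Or.inr ⟨u, w, huw, hau, haw, by rw [hgx u huv]; exact hu2,
          by rw [hgx w hwv]; exact hw2⟩
    · intro x hx
      have hxv : x ≠ v := by intro h; subst h; rw [hgv] at hx; omega
      have hfx : f x = 1 := by rw [hgx x hxv] at hx; exact hx
      obtain ⟨u, hadj, hu⟩ := h1 x hfx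
      by_cases huv : u = v
      · exact ⟨v, huv ▸ hadj, Or.inl hgv⟩
      · exact ⟨u, hadj, by rw [hgx u huv]; exact hu⟩
  have hM : IsMDRDF G g := by
    refine ⟨hDRDF, ?_⟩
    intro hd
    apply hnd
    intro x hx
    obtain ⟨u, hu, hadj⟩ := hd x (by simpa [Set.mem_setOf_eq, hzero x] using hx)
    exact ⟨u, by simpa [Set.mem_setOf_eq, hzero u] using hu, hadj⟩
  have hsum : ∑ x, g x + 1 = ∑ x, f x := by
    have h1 : ∑ x, g x = 2 + ∑ x ∈ Finset.univ \ {v}, f x := by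
      rw [hg, Finset.sum_update_of_mem (Finset.mem_univ v)]
    have h2 : ∑ x ∈ Finset.univ \ {v}, f x + f v = ∑ x, f x := by
      rw [← Finset.erase_eq]
      exact Finset.sum_erase_add _ _ (Finset.mem_univ v)
    omega
  have hle : mdrdNum G ≤ ∑ x, g x := Nat.sInf_le ⟨g, hM, rfl⟩
  omega
end

section
/- Let G be a connected graph and f=(V₀,V₁,V₂,V₃) a maximal double Roman dominating function of G of minimum weight with V₀ ≠ ∅. Then V₀ does not dominate all of V₁ ∪ V₂; that is, some vertex in V₁ ∪ V₂ has no neighbor in V₀. -/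
open Finset

theorem stmt2 {V : Type*} [Fintype V] (G : SimpleGraph V) (hG : G.Connected)
    (f : V → ℕ) (hf : IsMDRDF G f) (hmin : ∑ v, f v = mdrdNum G)
    (h0 : ∃ v, f v = 0) :
    ∃ v, (f v = 1 ∨ f v = 2) ∧ ∀ u, G.Adj v u → f u ≠ 0 := by
  obtain ⟨⟨hle, hc0, hc1⟩, hnd⟩ := hf
  simp only [IsDomSet, not_forall] at hnd
  obtain ⟨w, hw0, hwn⟩ := hnd
  simp only [Set.mem_setOf_eq] at hw0
  push_neg at hwn
  simp only [Set.mem_setOf_eq] at hwn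
  -- hwn : ∀ u, f u = 0 → ¬ G.Adj w u
  have hwn' : ∀ u, G.Adj w u → f u ≠ 0 := fun u ha h => hwn u h ha
  have hfw := hle w
  classical
  have hcases : f w = 1 ∨ f w = 2 ∨ f w = 3 := by omega
  rcases hcases with h | h | h
  · exact ⟨w, Or.inl h, hwn'⟩
  · exact ⟨w, Or.inr h, hwn'⟩
  · -- f w = 3 : lower to 2, contradict minimality
    exfalso
    set g := Function.update f w 2 with hg
    have hgw : g w = 2 := Function.update_self w 2 f
    have hgne : ∀ v, v ≠ w → g v = f v := fun v hv => Function.update_of_ne hv 2 f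
    have hgzero : ∀ v, g v = 0 ↔ f v = 0 := by
      intro v
      by_cases hv : v = w
      · subst hv; simp [hgw, h]
      · rw [hgne v hv]
    have hgdrdf : IsMDRDF G g := by
      refine ⟨⟨?_, ?_, ?_⟩, ?_⟩
      · intro v
        by_cases hv : v = w
        · subst hv; rw [hgw]; norm_num
        · rw [hgne v hv]; exact hle v
      · intro v hv
        rw [hgzero] at hv
        rcases hc0 v hv with ⟨u, hu, hu3⟩ | ⟨u, x, hux, hu, hx, hu2, hx2⟩
        · left
          refine ⟨u, hu, ?_⟩
          have : u ≠ w := fun he => hwn v hv (he ▸ hu.symm)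
          rw [hgne u this]; exact hu3
        · right
          have h1 : u ≠ w := fun he => hwn v hv (he ▸ hu.symm)
          have h2 : x ≠ w := fun he => hwn v hv (he ▸ hx.symm)
          exact ⟨u, x, hux, hu, hx, by rw [hgne u h1]; exact hu2,
            by rw [hgne x h2]; exact hx2⟩
      · intro v hv
        have hvw : v ≠ w := by intro he; rw [he, hgw] at hv; omega
        rw [hgne v hvw] at hv
        obtain ⟨u, hu, hu23⟩ := hc1 v hv
        refine ⟨u, hu, ?_⟩
        by_cases huw : u = w
        · subst huw; rw [hgw]; left; rfl
        · rw [hgne u huw]; exact hu23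
      · intro hd
        obtain ⟨u, hu, hadj⟩ := hd w (by simp [Set.mem_setOf_eq, hgw])
        simp only [Set.mem_setOf_eq] at hu
        rw [hgzero] at hu
        exact hwn u hu hadj
    have hsum : ∑ v, g v + 1 = ∑ v, f v := by
      rw [← Finset.sum_erase_add Finset.univ g (Finset.mem_univ w),
          ← Finset.sum_erase_add Finset.univ f (Finset.mem_univ w)]
      have : ∑ v ∈ Finset.univ.erase w, g v = ∑ v ∈ Finset.univ.erase w, f v :=
        Finset.sum_congr rfl fun v hv => hgne v (Finset.ne_of_mem_erase hv)
      rw [this, hgw, h]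
    have hle' : mdrdNum G ≤ ∑ v, g v := Nat.sInf_le ⟨g, hgdrdf, rfl⟩
    omega
end

section
/- For any graph G, γ_dR^m(G) ≤ 2·γ_mR(G), with equality if and only if G has no edges (G is the empty graph on n vertices). -/
open Finset

lemma bot_mrdf_ge {V : Type*} [Fintype V] (f : V → ℕ)
    (hf : IsMRDF (⊥ : SimpleGraph V) f) : Fintype.card V ≤ ∑ v, f v := by
  have h1 : ∀ v, 1 ≤ f v := by
    intro v
    by_contra hc
    obtain ⟨u, hadj, _⟩ := hf.1.2 v (by omega)
    simp at hadj
  calc Fintype.card V = ∑ _v : V, 1 := by simp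
    _ ≤ ∑ v, f v := Finset.sum_le_sum (fun v _ => h1 v)

lemma bot_mdrdf_ge {V : Type*} [Fintype V] (f : V → ℕ)
    (hf : IsMDRDF (⊥ : SimpleGraph V) f) : 2 * Fintype.card V ≤ ∑ v, f v := by
  have h1 : ∀ v, 2 ≤ f v := by
    intro v
    by_contra hc
    rcases Nat.lt_or_ge (f v) 1 with h | h
    · rcases hf.1.2.1 v (by omega) with ⟨u, hadj, _⟩ | ⟨u, w, _, hadj, _⟩ <;> simp at hadj
    · obtain ⟨u, hadj, _⟩ := hf.1.2.2 v (by omega)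
      simp at hadj
  calc 2 * Fintype.card V = ∑ _v : V, 2 := by simp [Finset.card_univ, mul_comm]
    _ ≤ ∑ v, f v := Finset.sum_le_sum (fun v _ => h1 v)

lemma eq_bot_case {V : Type*} [Fintype V] (G : SimpleGraph V) (h : G = ⊥) :
    mdrdNum G = 2 * mRomanNum G := by
  subst h
  cases isEmpty_or_nonempty V with
  | inl hE =>
    have h1 : {w | ∃ f, IsMRDF (⊥ : SimpleGraph V) f ∧ ∑ v, f v = w} = ∅ := by
      ext w
      simp only [Set.mem_setOf_eq, Set.mem_empty_iff_false, iff_false, not_exists]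
      rintro f ⟨⟨_, hnd⟩, _⟩
      exact hnd (fun v _ => isEmptyElim v)
    have h2 : {w | ∃ f, IsMDRDF (⊥ : SimpleGraph V) f ∧ ∑ v, f v = w} = ∅ := by
      ext w
      simp only [Set.mem_setOf_eq, Set.mem_empty_iff_false, iff_false, not_exists]
      rintro f ⟨⟨_, hnd⟩, _⟩
      exact hnd (fun v _ => isEmptyElim v)
    unfold mdrdNum mRomanNum; rw [h1, h2, Nat.sInf_empty]
  | inr hN =>
    obtain ⟨v₀⟩ := hN
    have hRmem : (Fintype.card V) ∈ {w | ∃ f, IsMRDF (⊥ : SimpleGraph V) f ∧ ∑ v, f v = w} := by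
      refine ⟨fun _ => 1, ⟨⟨fun v => by norm_num, fun v hv => by simp at hv⟩, ?_⟩, by simp⟩
      intro hd
      obtain ⟨u, hu, _⟩ := hd v₀ (by simp)
      simp at hu
    have hR : mRomanNum (⊥ : SimpleGraph V) = Fintype.card V := by
      apply le_antisymm (Nat.sInf_le hRmem)
      obtain ⟨f, hf, hsum⟩ := Nat.sInf_mem (⟨_, hRmem⟩ :
        {w | ∃ f, IsMRDF (⊥ : SimpleGraph V) f ∧ ∑ v, f v = w}.Nonempty)
      rw [← hsum]
      exact bot_mrdf_ge f hf
    have hDmem : (2 * Fintype.card V) ∈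
        {w | ∃ f, IsMDRDF (⊥ : SimpleGraph V) f ∧ ∑ v, f v = w} := by
      refine ⟨fun _ => 2, ⟨⟨fun v => by norm_num, fun v hv => by simp at hv,
        fun v hv => by simp at hv⟩, ?_⟩, by simp [Finset.card_univ, mul_comm]⟩
      intro hd
      obtain ⟨u, hu, _⟩ := hd v₀ (by simp)
      simp at hu
    have hD : mdrdNum (⊥ : SimpleGraph V) = 2 * Fintype.card V := by
      apply le_antisymm (Nat.sInf_le hDmem)
      obtain ⟨f, hf, hsum⟩ := Nat.sInf_mem (⟨_, hDmem⟩ :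
        {w | ∃ f, IsMDRDF (⊥ : SimpleGraph V) f ∧ ∑ v, f v = w}.Nonempty)
      rw [← hsum]
      exact bot_mdrdf_ge f hf
    rw [hR, hD]

lemma strict_aux {V : Type*} [Fintype V] (G : SimpleGraph V) (a b : V) (hab : G.Adj a b)
    (f : V → ℕ) (hf : IsMRDF G f) : mdrdNum G < 2 * ∑ v, f v := by
  classical
  by_cases h2 : ∃ v, f v = 2
  · obtain ⟨v₀, hv₀⟩ := h2
    set g : V → ℕ := fun v => if f v = 2 then 3 else 2 * f v with hg
    have hgMD : IsMDRDF G g := by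
      refine ⟨⟨fun v => ?_, fun v hv => ?_, fun v hv => ?_⟩, ?_⟩
      · have := hf.1.1 v
        simp only [hg]
        split <;> omega
      · have hfv : f v = 0 := by
          simp only [hg] at hv
          revert hv
          split <;> omega
        obtain ⟨u, hadj, hu2⟩ := hf.1.2 v hfv
        exact Or.inl ⟨u, hadj, by simp [hg, hu2]⟩
      · exfalso
        simp only [hg] at hv
        revert hv
        split <;> omega
      · have hseq : {v | g v = 0} = {v | f v = 0} := by
          ext v
          simp only [Set.mem_setOf_eq, hg]
          split <;> omega
        rw [hseq]
        exact hf.2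
    have hle : mdrdNum G ≤ ∑ v, g v :=
      Nat.sInf_le ⟨g, hgMD, rfl⟩
    have hlt : ∑ v, g v < ∑ v, 2 * f v := by
      apply Finset.sum_lt_sum
      · intro i _
        have := hf.1.1 i
        simp only [hg]
        split <;> omega
      · exact ⟨v₀, Finset.mem_univ _, by simp [hg, hv₀]⟩
    calc mdrdNum G ≤ ∑ v, g v := hle
      _ < ∑ v, 2 * f v := hlt
      _ = 2 * ∑ v, f v := by rw [Finset.mul_sum]
  · push_neg at h2
    have hf1 : ∀ v, f v = 1 := by
      intro v
      rcases Nat.lt_or_ge (f v) 1 with hlt | hge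
      · obtain ⟨u, _, hu2⟩ := hf.1.2 v (by omega)
        exact absurd hu2 (h2 u)
      · have := hf.1.1 v
        have := h2 v
        omega
    set g : V → ℕ := fun x => if x = b then 1 else 2 with hg
    have hgMD : IsMDRDF G g := by
      refine ⟨⟨fun v => ?_, fun v hv => ?_, fun v hv => ?_⟩, ?_⟩
      · simp only [hg]; split <;> omega
      · exfalso
        simp only [hg] at hv
        revert hv
        split <;> omega
      · have hvb : v = b := by
          simp only [hg] at hv
          revert hv
          split
          · intro _; assumption
          · intro h; omega
        refine ⟨a, hvb ▸ hab.symm, Or.inl ?_⟩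
        simp only [hg]
        rw [if_neg hab.ne]
      · intro hd
        obtain ⟨u, hu, _⟩ := hd a (by simp only [hg, Set.mem_setOf_eq]; split <;> omega)
        simp only [hg, Set.mem_setOf_eq] at hu
        revert hu
        split <;> omega
    have hle : mdrdNum G ≤ ∑ v, g v :=
      Nat.sInf_le ⟨g, hgMD, rfl⟩
    have hlt : ∑ v, g v < ∑ v, 2 * f v := by
      apply Finset.sum_lt_sum
      · intro i _
        have := hf1 i
        simp only [hg]
        split <;> omega
      · refine ⟨b, Finset.mem_univ _, ?_⟩
        have := hf1 b
        simp [hg, this]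
    calc mdrdNum G ≤ ∑ v, g v := hle
      _ < ∑ v, 2 * f v := hlt
      _ = 2 * ∑ v, f v := by rw [Finset.mul_sum]

lemma strict_case {V : Type*} [Fintype V] (G : SimpleGraph V) (h : G ≠ ⊥) :
    mdrdNum G < 2 * mRomanNum G := by
  obtain ⟨a, b, hab⟩ : ∃ a b, G.Adj a b := by
    by_contra hc
    push_neg at hc
    apply h
    ext x y
    simp [hc]
  have hRmem : (Fintype.card V) ∈ {w | ∃ f, IsMRDF G f ∧ ∑ v, f v = w} := by
    refine ⟨fun _ => 1, ⟨⟨fun v => by norm_num, fun v hv => by simp at hv⟩, ?_⟩, by simp⟩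
    intro hd
    obtain ⟨u, hu, _⟩ := hd a (by simp)
    simp at hu
  obtain ⟨f, hf, hsum⟩ := Nat.sInf_mem (⟨_, hRmem⟩ :
    {w | ∃ f, IsMRDF G f ∧ ∑ v, f v = w}.Nonempty)
  have key := strict_aux G a b hab f hf
  unfold mRomanNum
  rw [← hsum]
  exact key

theorem stmt3 {V : Type*} [Fintype V] (G : SimpleGraph V) :
    mdrdNum G ≤ 2 * mRomanNum G ∧
    (mdrdNum G = 2 * mRomanNum G ↔ G = ⊥) := by
  by_cases hbot : G = ⊥
  · exact ⟨(eq_bot_case G hbot).le, ⟨fun _ => hbot, fun _ => eq_bot_case G hbot⟩⟩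
  · have hs := strict_case G hbot
    exact ⟨hs.le, ⟨fun he => absurd he (ne_of_lt hs), fun hb => absurd hb hbot⟩⟩
end

section
/- If G is a graph without isolated vertices, then γ_dR^m(G) ≤ 2·γ_mR(G) − 1, with equality if and only if G = K₂. -/
/-!
Let `f` be a minimum maximal Roman dominating function, `Vᵢ = f⁻¹(i)`. Promoting
`0 ↦ 0, 1 ↦ 2, 2 ↦ 3` keeps the 0-set, so it gives a maximal double Roman dominating function of
weight `2 w(f) - |V₂|`, which saves 2 when `|V₂| ≥ 2`. A vertex not dominated by `V₀` and any
neighbour of it are both nonzero, so when `|V₂| = 1` some vertex of `V₁` has a nonzero neighbour;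
demoting it back to `1` saves one more. When `V₂ = ∅` we have `f ≡ 1`: if `G` is not complete,
`v ↦ 0, u ↦ 2` (with `v` adjacent to `u` and not to some `c`) is another minimum function with
`V₂ ≠ ∅`, and `Kₙ` with `n ≥ 3` has the function `a ↦ 2`, rest `1`, of weight `n + 1 ≤ 2n - 2`.
Finally every maximal (double) Roman dominating function on a graph without isolated vertices
has weight at least 2 (resp. 3), which is attained on `K₂`.
-/

open Finset

open Function

theorem Finset.sum_update_add_apply {ι M : Type*} [AddCommMonoid M] [Fintype ι] [DecidableEq ι]
    (f : ι → M) (i : ι) (b : M) : (∑ x, update f i b x) + f i = (∑ x, f x) + b := by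
  rw [Finset.sum_update_of_mem (mem_univ i), Finset.sum_eq_sum_sdiff_singleton_add (mem_univ i)]
  abel

section
variable {V : Type*} {G : SimpleGraph V}

lemma exists_adj_ne_zero_of_not_isDomSet {f : V → ℕ} (h : ∀ v, ∃ u, G.Adj v u)
    (hnd : ¬ IsDomSet G {v | f v = 0}) : ∃ x y, G.Adj x y ∧ f x ≠ 0 ∧ f y ≠ 0 := by
  simp only [IsDomSet, Set.mem_ofPred_eq, not_forall, not_exists, not_and] at hnd
  obtain ⟨x, hx, hxd⟩ := hnd
  obtain ⟨y, hxy⟩ := h x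
  exact ⟨x, y, hxy, hx, fun hy => hxd y hy hxy⟩

lemma IsRDF.eq_one_of_forall_ne_two {f : V → ℕ} (hf : IsRDF G f) (h2 : ∀ x, f x ≠ 2) (x : V) :
    f x = 1 := by
  have hx0 : f x ≠ 0 := fun hx => by
    obtain ⟨u, -, hu⟩ := hf.2 x hx
    exact h2 u hu
  have := hf.1 x
  have := h2 x
  omega

lemma IsMRDF.two_le_sum [Fintype V] {f : V → ℕ} (hf : IsMRDF G f) (h : ∀ v, ∃ u, G.Adj v u) :
    2 ≤ ∑ x, f x := by
  obtain ⟨x, y, hxy, hx, hy⟩ := exists_adj_ne_zero_of_not_isDomSet h hf.2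
  have := Finset.add_le_sum (fun i _ => Nat.zero_le (f i)) (mem_univ x) (mem_univ y) hxy.ne
  omega

lemma IsMDRDF.three_le_sum [Fintype V] {g : V → ℕ} (hg : IsMDRDF G g) (h : ∀ v, ∃ u, G.Adj v u) :
    3 ≤ ∑ x, g x := by
  obtain ⟨x, y, hxy, hx, hy⟩ := exists_adj_ne_zero_of_not_isDomSet h hg.2
  have hsum {a b : V} (hab : G.Adj a b) : g a + g b ≤ ∑ x, g x :=
    Finset.add_le_sum (fun i _ => Nat.zero_le (g i)) (mem_univ a) (mem_univ b) hab.ne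
  by_cases hx1 : g x = 1
  · obtain ⟨w, hxw, hw⟩ := hg.1.2.2 x hx1
    have := hsum hxw
    omega
  · by_cases hy1 : g y = 1
    · obtain ⟨w, hyw, hw⟩ := hg.1.2.2 y hy1
      have := hsum hyw
      omega
    · have := hsum hxy
      omega

lemma isMRDF_const_one [Nonempty V] : IsMRDF G fun _ => 1 := by
  refine ⟨⟨fun _ => by norm_num, fun _ h => absurd h one_ne_zero⟩, fun hd => ?_⟩
  obtain ⟨_, hu, -⟩ := hd (Classical.arbitrary V) one_ne_zero
  exact one_ne_zero hu

lemma isMDRDF_const_two [Nonempty V] : IsMDRDF G fun _ => 2 := by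
  refine ⟨⟨fun _ => by norm_num, fun _ h => absurd h two_ne_zero, fun _ h => absurd h (by norm_num)⟩,
    fun hd => ?_⟩
  obtain ⟨_, hu, -⟩ := hd (Classical.arbitrary V) two_ne_zero
  exact two_ne_zero hu

lemma isMDRDF_update_const_one [DecidableEq V] {a : V} (ha : G.IsUniversal a) :
    IsMDRDF G (update (fun _ => 1) a 2) := by
  have hne_zero (x : V) : update (fun _ => 1) a 2 x ≠ 0 := by
    rw [update_apply]; split_ifs <;> norm_num
  refine ⟨⟨fun x => ?_, fun x hx => absurd hx (hne_zero x), fun x hx => ?_⟩, fun hd => ?_⟩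
  · rw [update_apply]; split_ifs <;> norm_num
  · have hxa : a ≠ x := by rintro rfl; simp at hx
    exact ⟨a, (ha hxa).symm, by simp⟩
  · obtain ⟨_, hu, -⟩ := hd a (hne_zero a)
    exact hne_zero _ hu

lemma sum_update_const_one [Fintype V] [DecidableEq V] (a : V) :
    ∑ x, update (fun _ => 1) a 2 x = Fintype.card V + 1 := by
  have := Finset.sum_update_add_apply (fun _ : V => 1) a 2
  simp only [sum_const, card_univ, smul_eq_mul, mul_one] at this
  omega

def doubleOfRoman (f : V → ℕ) : V → ℕ := fun x => if f x = 2 then 3 else 2 * f x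

lemma doubleOfRoman_eq_zero_iff {f : V → ℕ} {x : V} : doubleOfRoman f x = 0 ↔ f x = 0 := by
  unfold doubleOfRoman; split_ifs with h <;> simp [h]

lemma IsMRDF.isMDRDF_doubleOfRoman {f : V → ℕ} (hf : IsMRDF G f) :
    IsMDRDF G (doubleOfRoman f) := by
  obtain ⟨⟨hle, hzero⟩, hnd⟩ := hf
  refine ⟨⟨fun x => ?_, fun x hx => ?_, fun x hx => ?_⟩, ?_⟩
  · have := hle x; unfold doubleOfRoman; split_ifs <;> omega
  · obtain ⟨u, hxu, hu⟩ := hzero x (doubleOfRoman_eq_zero_iff.1 hx)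
    exact Or.inl ⟨u, hxu, by simp [doubleOfRoman, hu]⟩
  · unfold doubleOfRoman at hx; split_ifs at hx <;> omega
  · simpa only [doubleOfRoman_eq_zero_iff] using hnd

lemma sum_doubleOfRoman_add_card [Fintype V] {f : V → ℕ} (hf : ∀ x, f x ≤ 2) :
    ∑ x, doubleOfRoman f x + #{x | f x = 2} = 2 * ∑ x, f x := by
  rw [card_filter, ← sum_add_distrib, mul_sum]
  refine sum_congr rfl fun x _ => ?_
  have := hf x
  unfold doubleOfRoman
  split_ifs <;> omega

lemma IsMRDF.isMDRDF_update_doubleOfRoman [DecidableEq V] {f : V → ℕ} (hf : IsMRDF G f)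
    {z y : V} (hz : f z = 1) (hzy : G.Adj z y) (hy : f y ≠ 0) :
    IsMDRDF G (update (doubleOfRoman f) z 1) := by
  obtain ⟨⟨hle, hzero, -⟩, hnd⟩ := hf.isMDRDF_doubleOfRoman
  have hzero_iff (x : V) : update (doubleOfRoman f) z 1 x = 0 ↔ f x = 0 := by
    rw [update_apply]; split_ifs with hxz
    · simp [hxz, hz]
    · exact doubleOfRoman_eq_zero_iff
  refine ⟨⟨fun x => ?_, fun x hx => ?_, fun x hx => ?_⟩, ?_⟩
  · rw [update_apply]; split_ifs <;> simp [hle x]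
  · obtain ⟨u, hxu, hu⟩ := hf.1.2 x ((hzero_iff x).1 hx)
    have huz : u ≠ z := by rintro rfl; omega
    exact Or.inl ⟨u, hxu, by simp [huz, doubleOfRoman, hu]⟩
  · rw [update_apply] at hx
    split_ifs at hx with hxz
    · subst hxz
      refine ⟨y, hzy, ?_⟩
      have := hf.1.1 y
      rw [update_of_ne hzy.ne.symm]
      unfold doubleOfRoman
      split_ifs <;> omega
    · unfold doubleOfRoman at hx; split_ifs at hx <;> omega
  · simpa only [hzero_iff] using hf.2

lemma IsMRDF.exists_pair_eq_two_or_exists_eq_one_adj {f : V → ℕ} (hf : IsMRDF G f)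
    (h : ∀ v, ∃ u, G.Adj v u) :
    (∃ u v, u ≠ v ∧ f u = 2 ∧ f v = 2) ∨ ∃ z y, f z = 1 ∧ G.Adj z y ∧ f y ≠ 0 := by
  obtain ⟨x, y, hxy, hx, hy⟩ := exists_adj_ne_zero_of_not_isDomSet h hf.2
  have := hf.1.1 x
  have := hf.1.1 y
  by_cases hx1 : f x = 1
  · exact Or.inr ⟨x, y, hx1, hxy, hy⟩
  by_cases hy1 : f y = 1
  · exact Or.inr ⟨y, x, hy1, hxy.symm, hx⟩
  exact Or.inl ⟨x, y, hxy.ne, by omega, by omega⟩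

lemma IsMRDF.exists_isMDRDF_sum_add_two_le [Fintype V] {f : V → ℕ} (hf : IsMRDF G f)
    (h : ∀ v, ∃ u, G.Adj v u) {u : V} (hu : f u = 2) :
    ∃ g, IsMDRDF G g ∧ ∑ x, g x + 2 ≤ 2 * ∑ x, f x := by
  classical
  have hsum := sum_doubleOfRoman_add_card hf.1.1
  rcases hf.exists_pair_eq_two_or_exists_eq_one_adj h with ⟨a, b, hab, ha, hb⟩ | ⟨z, y, hz, hzy, hy⟩
  · have : 1 < #{x | f x = 2} := one_lt_card_iff.2 ⟨a, b, by simpa, by simpa, hab⟩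
    exact ⟨_, hf.isMDRDF_doubleOfRoman, by omega⟩
  · have : 0 < #{x | f x = 2} := card_pos.2 ⟨u, by simpa⟩
    have hdemote := Finset.sum_update_add_apply (doubleOfRoman f) z 1
    have : doubleOfRoman f z = 2 := by simp [doubleOfRoman, hz]
    exact ⟨_, hf.isMDRDF_update_doubleOfRoman hz hzy hy, by omega⟩

lemma exists_isMRDF_eq_two_sum_eq_card [Fintype V] [DecidableEq V] {v c u : V} (hvc : v ≠ c)
    (hnadj : ¬ G.Adj v c) (hvu : G.Adj v u) :
    ∃ f, IsMRDF G f ∧ f u = 2 ∧ ∑ x, f x = Fintype.card V := by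
  have huv : u ≠ v := hvu.ne.symm
  have h₀ := Finset.sum_update_add_apply (fun _ : V => 1) v 0
  rw [sum_const, card_univ, smul_eq_mul, mul_one] at h₀
  set f₀ : V → ℕ := update (fun _ => 1) v 0
  have hzero_iff (x : V) : update f₀ u 2 x = 0 ↔ x = v := by
    simp only [f₀, update_apply]; split_ifs <;> simp_all
  refine ⟨update f₀ u 2, ⟨⟨fun x => ?_, fun x hx => ?_⟩, fun hd => ?_⟩, update_self .., ?_⟩
  · simp only [f₀, update_apply]; split_ifs <;> norm_num
  · obtain rfl := (hzero_iff x).1 hx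
    exact ⟨u, hvu, update_self ..⟩
  · obtain ⟨w, hw, hcw⟩ := hd c (by simpa [hzero_iff] using hvc.symm)
    obtain rfl := (hzero_iff w).1 hw
    exact hnadj hcw.symm
  · have h₁ := Finset.sum_update_add_apply f₀ u 2
    have : f₀ u = 1 := update_of_ne huv ..
    omega

lemma exists_isMRDF_sum_eq_mRomanNum [Fintype V] [Nonempty V] :
    ∃ f, IsMRDF G f ∧ ∑ x, f x = mRomanNum G :=
  Nat.sInf_mem (s := {w | ∃ f, IsMRDF G f ∧ ∑ x, f x = w}) ⟨_, _, isMRDF_const_one, rfl⟩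

lemma mRomanNum_le_card [Fintype V] [Nonempty V] : mRomanNum G ≤ Fintype.card V :=
  Nat.sInf_le ⟨_, isMRDF_const_one, by simp⟩

lemma two_le_mRomanNum [Fintype V] [Nonempty V] (h : ∀ v, ∃ u, G.Adj v u) : 2 ≤ mRomanNum G := by
  obtain ⟨f, hf, hfw⟩ := exists_isMRDF_sum_eq_mRomanNum (G := G)
  exact hfw ▸ hf.two_le_sum h

lemma mdrdNum_le_card_add_one [Fintype V] {a : V} (ha : G.IsUniversal a) :
    mdrdNum G ≤ Fintype.card V + 1 := by
  classical
  exact Nat.sInf_le ⟨_, isMDRDF_update_const_one ha, sum_update_const_one a⟩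

lemma three_le_mdrdNum [Fintype V] [Nonempty V] (h : ∀ v, ∃ u, G.Adj v u) : 3 ≤ mdrdNum G :=
  le_csInf ⟨_, _, isMDRDF_const_two, rfl⟩ fun _ ⟨_, hg, hgw⟩ => hgw ▸ hg.three_le_sum h

theorem mdrdNum_add_two_le [Fintype V] [Nonempty V] (h : ∀ v, ∃ u, G.Adj v u)
    (hK : ¬ (Fintype.card V = 2 ∧ G = ⊤)) : mdrdNum G + 2 ≤ 2 * mRomanNum G := by
  classical
  obtain ⟨f, hf, hfw⟩ := exists_isMRDF_sum_eq_mRomanNum (G := G)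
  suffices ∃ g, IsMDRDF G g ∧ ∑ x, g x + 2 ≤ 2 * ∑ x, f x by
    obtain ⟨g, hg, hgw⟩ := this
    have : mdrdNum G ≤ ∑ x, g x := Nat.sInf_le ⟨g, hg, rfl⟩
    omega
  by_cases h2 : ∃ u, f u = 2
  · obtain ⟨u, hu⟩ := h2
    exact hf.exists_isMDRDF_sum_add_two_le h hu
  push Not at h2
  have hfn : ∑ x, f x = Fintype.card V := by simp [hf.1.eq_one_of_forall_ne_two h2]
  by_cases hG : G = ⊤
  · obtain ⟨a⟩ := ‹Nonempty V›
    obtain ⟨b, hab⟩ := h a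
    have : 1 < Fintype.card V := Fintype.one_lt_card_iff.2 ⟨a, b, hab.ne⟩
    have : Fintype.card V ≠ 2 := fun hn => hK ⟨hn, hG⟩
    refine ⟨_, isMDRDF_update_const_one (SimpleGraph.eq_top_iff_forall_isUniversal.1 hG a), ?_⟩
    rw [sum_update_const_one]
    omega
  · obtain ⟨v, c, hvc, hnadj⟩ := SimpleGraph.ne_top_iff_exists_not_adj.1 hG
    obtain ⟨u, hvu⟩ := h v
    obtain ⟨f', hf', hu, hf'n⟩ := exists_isMRDF_eq_two_sum_eq_card hvc hnadj hvu
    obtain ⟨g, hg, hgw⟩ := hf'.exists_isMDRDF_sum_add_two_le h hu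
    exact ⟨g, hg, by omega⟩

end

theorem stmt4 {V : Type*} [Fintype V] [Nonempty V] (G : SimpleGraph V)
    (h : ∀ v, ∃ u, G.Adj v u) :
    mdrdNum G ≤ 2 * mRomanNum G - 1 ∧
    (mdrdNum G = 2 * mRomanNum G - 1 ↔ Fintype.card V = 2 ∧ G = ⊤) := by
  by_cases hK : Fintype.card V = 2 ∧ G = ⊤
  · obtain ⟨hn, rfl⟩ := hK
    have hm : mRomanNum (⊤ : SimpleGraph V) = 2 := by
      have := mRomanNum_le_card (G := (⊤ : SimpleGraph V))
      have := two_le_mRomanNum h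
      omega
    have hd : mdrdNum (⊤ : SimpleGraph V) = 3 := by
      have := mdrdNum_le_card_add_one (G := ⊤) (a := Classical.arbitrary V) fun _ hx => hx
      have := three_le_mdrdNum h
      omega
    simp [hm, hd, hn]
  · have := mdrdNum_add_two_le h hK
    exact ⟨by omega, iff_of_false (by omega) hK⟩
end

section
/- If G is a nontrivial connected graph different from a complete graph K_n, then γ_dR^m(G) ≤ 2·γ_mR(G) − 2. -/
open Finset

lemma sum_bound_aux {V : Type*} [Fintype V] [DecidableEq V] (f g : V → ℕ) (t : Finset V)
    (h1 : ∀ v ∉ t, g v ≤ 2 * f v)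
    (h2 : (∑ v ∈ t, g v) + 2 ≤ 2 * ∑ v ∈ t, f v) :
    (∑ v, g v) + 2 ≤ 2 * ∑ v, f v := by
  have hg := Finset.sum_sdiff (f := g) (Finset.subset_univ t)
  have hf := Finset.sum_sdiff (f := f) (Finset.subset_univ t)
  have hle : ∑ v ∈ Finset.univ \ t, g v ≤ ∑ v ∈ Finset.univ \ t, 2 * f v :=
    Finset.sum_le_sum fun v hv => h1 v (Finset.mem_sdiff.mp hv).2
  rw [← Finset.mul_sum] at hle
  omega

lemma mdrd_le_of_mdrdf {V : Type*} [Fintype V] (G : SimpleGraph V) (g : V → ℕ)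
    (hg : IsMDRDF G g) : mdrdNum G ≤ ∑ v, g v :=
  Nat.sInf_le ⟨g, hg, rfl⟩

theorem stmt5 {V : Type*} [Fintype V] (G : SimpleGraph V)
    (hconn : G.Connected) (hnontriv : 2 ≤ Fintype.card V) (hncomp : G ≠ ⊤) :
    mdrdNum G ≤ 2 * mRomanNum G - 2 := by
  classical
  have hne : Nonempty V := Fintype.card_pos_iff.mp (by omega)
  -- every vertex has a neighbor
  have hnbr : ∀ v : V, ∃ u, G.Adj v u := by
    intro v
    obtain ⟨w, hw⟩ := Fintype.exists_ne_of_one_lt_card (by omega) v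
    obtain ⟨p⟩ := hconn.preconnected v w
    cases p with
    | nil => exact absurd rfl hw.symm
    | cons h _ => exact ⟨_, h⟩
  -- a nonadjacent pair
  obtain ⟨x, y, hxy, hnadj⟩ : ∃ x y : V, x ≠ y ∧ ¬ G.Adj x y := by
    by_contra h
    push_neg at h
    apply hncomp
    ext a b
    simp only [SimpleGraph.top_adj]
    exact ⟨fun hab => hab.ne, fun hab => h a b hab⟩
  -- the defining set of mRomanNum is nonempty
  have hSne : {w | ∃ f, IsMRDF G f ∧ ∑ v, f v = w}.Nonempty := by
    refine ⟨_, fun _ => 2, ⟨⟨fun _ => le_refl 2, fun v hv => absurd hv (by simp)⟩, ?_⟩, rfl⟩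
    intro hdom
    obtain ⟨u, hu, _⟩ := hdom (Classical.arbitrary V) (by simp)
    simp at hu
  obtain ⟨f, hf, hw⟩ := Nat.sInf_mem hSne
  clear hSne
  replace hw : ∑ v, f v = mRomanNum G := hw
  have hfle := hf.1.1
  have hf0 := hf.1.2
  -- a helper giving the final bound from an MDRDF with small weight
  have key : ∀ g : V → ℕ, IsMDRDF G g → (∑ v, g v) + 2 ≤ 2 * ∑ v, f v →
      mdrdNum G ≤ 2 * mRomanNum G - 2 := by
    intro g hg hsum
    have h1 := mdrd_le_of_mdrdf G g hg
    rw [hw] at hsum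
    omega
  by_cases h2 : ∃ z₁ z₂ : V, z₁ ≠ z₂ ∧ f z₁ = 2 ∧ f z₂ = 2
  · -- at least two vertices with label 2
    obtain ⟨z₁, z₂, hz12, hz1, hz2⟩ := h2
    obtain ⟨g, hgdef⟩ : ∃ g : V → ℕ,
        g = fun v => if f v = 2 then 3 else if f v = 1 then 2 else 0 := ⟨_, rfl⟩
    have hzeros : ∀ v, g v = 0 → f v = 0 := by
      intro v hv
      simp only [hgdef] at hv
      have := hfle v
      split_ifs at hv <;> omega
    have hnz : ∀ v, f v ≠ 0 → g v ≠ 0 := by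
      intro v hv
      simp only [hgdef]
      have := hfle v
      split_ifs <;> omega
    have hg : IsMDRDF G g := by
      refine ⟨⟨fun v => by simp only [hgdef]; split_ifs <;> omega, ?_, ?_⟩, ?_⟩
      · intro v hv
        obtain ⟨u, hu, hu2⟩ := hf0 v (hzeros v hv)
        exact Or.inl ⟨u, hu, by simp [hgdef, hu2]⟩
      · intro v hv
        simp only [hgdef] at hv
        split_ifs at hv <;> omega
      · intro hdom
        apply hf.2
        intro v hv
        simp only [Set.mem_setOf_eq] at hv
        obtain ⟨u, hu, hadj⟩ := hdom v (hnz v hv)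
        exact ⟨u, hzeros u hu, hadj⟩
    apply key g hg
    apply sum_bound_aux f g {z₁, z₂}
    · intro v _
      simp only [hgdef]
      have := hfle v
      split_ifs <;> omega
    · rw [Finset.sum_pair hz12, Finset.sum_pair hz12]
      have e1 : g z₁ = 3 := by simp [hgdef, hz1]
      have e2 : g z₂ = 3 := by simp [hgdef, hz2]
      omega
  · by_cases h1 : ∃ z : V, f z = 2
    · -- exactly one vertex z with label 2
      obtain ⟨z, hz⟩ := h1
      have huniq : ∀ v, f v = 2 → v = z := by
        intro v hv
        by_contra hvz
        exact h2 ⟨v, z, hvz, hv, hz⟩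
      -- find b with f b = 1 having a neighbor c with f c ≠ 0
      have hmax := hf.2
      unfold IsDomSet at hmax
      push_neg at hmax
      obtain ⟨a, ha0, ha⟩ := hmax
      simp only [Set.mem_setOf_eq] at ha0 ha
      obtain ⟨b, c, hb1, hbc, hc0⟩ : ∃ b c : V, f b = 1 ∧ G.Adj b c ∧ f c ≠ 0 := by
        rcases Nat.lt_or_ge (f a) 2 with hlt | hge
        · obtain ⟨c, hc⟩ := hnbr a
          refine ⟨a, c, by omega, hc, fun h0 => ha c h0 hc⟩
        · have haz : a = z := huniq a (le_antisymm (hfle a) hge)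
          have hV0 : ∀ v, f v ≠ 0 := by
            intro v hv0
            obtain ⟨u, hu, hu2⟩ := hf0 v hv0
            have huz : u = z := huniq u hu2
            subst huz; subst haz
            exact ha v hv0 hu.symm
          obtain ⟨b, hb⟩ := Fintype.exists_ne_of_one_lt_card (by omega) z
          have hb1 : f b = 1 := by
            have hA := hfle b
            have hB : f b ≠ 2 := fun h => hb (huniq b h)
            have hC := hV0 b
            omega
          obtain ⟨c, hc⟩ := hnbr b
          exact ⟨b, c, hb1, hc, hV0 c⟩
      obtain ⟨g, hgdef⟩ : ∃ g : V → ℕ,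
          g = fun v => if v = b then 1 else if f v = 2 then 3
            else if f v = 1 then 2 else 0 := ⟨_, rfl⟩
      have hzeros : ∀ v, g v = 0 → f v = 0 := by
        intro v hv
        simp only [hgdef] at hv
        have := hfle v
        split_ifs at hv <;> omega
      have hnz : ∀ v, f v ≠ 0 → g v ≠ 0 := by
        intro v hv
        simp only [hgdef]
        have := hfle v
        split_ifs <;> omega
      have hg : IsMDRDF G g := by
        refine ⟨⟨fun v => by simp only [hgdef]; split_ifs <;> omega, ?_, ?_⟩, ?_⟩
        · intro v hv
          obtain ⟨u, hu, hu2⟩ := hf0 v (hzeros v hv)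
          have hub : u ≠ b := fun h => by rw [h, hb1] at hu2; omega
          exact Or.inl ⟨u, hu, by simp [hgdef, hub, hu2]⟩
        · intro v hv
          have hvb : v = b := by
            simp only [hgdef] at hv
            split_ifs at hv <;> first | assumption | omega
          subst hvb
          have hcb : c ≠ v := hbc.ne'
          refine ⟨c, hbc, ?_⟩
          have := hfle c
          rcases Nat.lt_or_ge (f c) 2 with hlt | hge
          · left
            simp only [hgdef]
            rw [if_neg hcb, if_neg (by omega), if_pos (by omega)]
          · right
            simp only [hgdef]
            rw [if_neg hcb, if_pos (by omega)]
        · intro hdom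
          apply hf.2
          intro v hv
          simp only [Set.mem_setOf_eq] at hv
          obtain ⟨u, hu, hadj⟩ := hdom v (hnz v hv)
          exact ⟨u, hzeros u hu, hadj⟩
      apply key g hg
      have hbz : b ≠ z := fun h => by rw [h, hz] at hb1; omega
      apply sum_bound_aux f g {b, z}
      · intro v hv
        simp only [Finset.mem_insert, Finset.mem_singleton, not_or] at hv
        simp only [hgdef]
        have := hfle v
        rw [if_neg hv.1]
        split_ifs <;> omega
      · rw [Finset.sum_pair hbz, Finset.sum_pair hbz]
        have e1 : g b = 1 := by simp [hgdef]
        have e2 : g z = 3 := by simp [hgdef, hbz.symm, hz]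
        omega
    · -- no vertex with label 2: f is constantly 1
      push_neg at h1
      have hfone : ∀ v, f v = 1 := by
        intro v
        have hA := hfle v
        have h0 : f v ≠ 0 := by
          intro hv0
          obtain ⟨u, _, hu2⟩ := hf0 v hv0
          exact h1 u hu2
        have hB := h1 v
        omega
      by_cases hdeg : ∃ u w : V, u ≠ w ∧ G.Adj x u ∧ G.Adj x w
      · -- x has at least two neighbors
        obtain ⟨u, w, huw, hxu, hxw⟩ := hdeg
        obtain ⟨g, hgdef⟩ : ∃ g : V → ℕ,
            g = fun v => if v = x then 0 else 2 := ⟨_, rfl⟩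
        have hg : IsMDRDF G g := by
          refine ⟨⟨fun v => by simp only [hgdef]; split_ifs <;> omega, ?_, ?_⟩, ?_⟩
          · intro v hv
            have hvx : v = x := by simp only [hgdef] at hv; split_ifs at hv <;> first | assumption | omega
            subst hvx
            exact Or.inr ⟨u, w, huw, hxu, hxw, by simp [hgdef, hxu.ne'],
              by simp [hgdef, hxw.ne']⟩
          · intro v hv
            simp only [hgdef] at hv
            split_ifs at hv <;> omega
          · intro hdom
            have hy : y ∉ {v | g v = 0} := by
              simp [hgdef, hxy.symm]
            have hzero : ∀ v, g v = 0 → v = x := by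
              intro v hv
              simp only [hgdef] at hv
              split_ifs at hv with h <;> first | assumption | omega
            obtain ⟨u', hu', hadj⟩ := hdom y hy
            exact hnadj ((hzero u' hu') ▸ hadj).symm
        apply key g hg
        apply sum_bound_aux f g {x}
        · intro v hv
          simp only [Finset.mem_singleton] at hv
          simp [hgdef, hv, hfone v]
        · rw [Finset.sum_singleton, Finset.sum_singleton]
          have e1 : g x = 0 := by simp [hgdef]
          have e0 := hfone x
          omega
      · -- x has a unique neighbor u
        push_neg at hdeg
        obtain ⟨u, hxu⟩ := hnbr x
        have hyu : y ≠ u := fun h => hnadj (h ▸ hxu)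
        have hyx : y ≠ x := hxy.symm
        have hux : u ≠ x := hxu.ne'
        obtain ⟨g, hgdef⟩ : ∃ g : V → ℕ,
            g = fun v => if v = x then 0 else if v = u then 3
              else if v = y then 1 else 2 := ⟨_, rfl⟩
        have hg : IsMDRDF G g := by
          refine ⟨⟨fun v => by simp only [hgdef]; split_ifs <;> omega, ?_, ?_⟩, ?_⟩
          · intro v hv
            have hvx : v = x := by simp only [hgdef] at hv; split_ifs at hv <;> first | assumption | omega
            subst hvx
            exact Or.inl ⟨u, hxu, by simp [hgdef, hux]⟩
          · intro v hv
            have hvy : v = y := by simp only [hgdef] at hv; split_ifs at hv <;> first | assumption | omega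
            obtain ⟨c, hc⟩ := hnbr y
            have hcy : c ≠ y := hc.ne'
            have hcx : c ≠ x := by
              intro h
              rw [h] at hc
              exact hnadj hc.symm
            refine ⟨c, hvy ▸ hc, ?_⟩
            by_cases hcu : c = u
            · right; simp [hgdef, hcu, hux]
            · left
              simp only [hgdef]
              rw [if_neg hcx, if_neg hcu, if_neg hcy]
          · intro hdom
            have hy : y ∉ {v | g v = 0} := by
              simp [hgdef, hyx, hyu]
            have hzero : ∀ v, g v = 0 → v = x := by
              intro v hv
              simp only [hgdef] at hv
              split_ifs at hv with h <;> first | assumption | omega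
            obtain ⟨u', hu', hadj⟩ := hdom y hy
            exact hnadj ((hzero u' hu') ▸ hadj).symm
        apply key g hg
        have hxune : x ≠ u := hux.symm
        have huyne : u ≠ y := hyu.symm
        apply sum_bound_aux f g {x, u, y}
        · intro v hv
          simp only [Finset.mem_insert, Finset.mem_singleton, not_or] at hv
          simp [hgdef, hv.1, hv.2.1, hv.2.2, hfone v]
        · have h1s : ∑ v ∈ ({x, u, y} : Finset V), g v = g x + (g u + g y) := by
            rw [Finset.sum_insert (by simp [hxune, hxy]),
              Finset.sum_insert (by simp [huyne]), Finset.sum_singleton]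
          have h2s : ∑ v ∈ ({x, u, y} : Finset V), f v = f x + (f u + f y) := by
            rw [Finset.sum_insert (by simp [hxune, hxy]),
              Finset.sum_insert (by simp [huyne]), Finset.sum_singleton]
          have e1 : g x = 0 := by simp [hgdef]
          have e2 : g u = 3 := by simp [hgdef, hux]
          have e3 : g y = 1 := by simp [hgdef, hyx, hyu]
          have e4 := hfone x
          have e5 := hfone u
          have e6 := hfone y
          omega
end

section
/- For every graph G, γ_mR(G) < γ_dR^m(G); that is, the maximal Roman domination number is strictly less than the maximal double Roman domination number. -/
open Finset

theorem stmt6 {V : Type*} [Fintype V] [Nonempty V] (G : SimpleGraph V) :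
    mRomanNum G < mdrdNum G := by
  classical
  obtain ⟨v0⟩ := ‹Nonempty V›
  have hne : {w | ∃ f, IsMDRDF G f ∧ ∑ v, f v = w}.Nonempty := by
    refine ⟨∑ _v : V, 3, fun _ => 3, ⟨⟨fun v => le_refl 3, fun v h => by simp at h,
      fun v h => by simp at h⟩, ?_⟩, rfl⟩
    intro hd
    obtain ⟨u, hu, -⟩ := hd v0 (by simp)
    simp at hu
  have hm : mdrdNum G ∈ {w | ∃ f, IsMDRDF G f ∧ ∑ v, f v = w} := Nat.sInf_mem hne
  obtain ⟨f, ⟨⟨hf3, hf0, hf1⟩, hfnd⟩, hfw⟩ := hm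
  suffices h : ∃ g, IsMRDF G g ∧ ∑ v, g v < mdrdNum G by
    obtain ⟨g, hg, hlt⟩ := h
    exact lt_of_le_of_lt (Nat.sInf_le ⟨g, hg, rfl⟩) hlt
  by_cases h3 : ∃ v, f v = 3
  · obtain ⟨w3, hw3⟩ := h3
    refine ⟨fun v => min (f v) 2, ⟨⟨fun v => min_le_right _ _, ?_⟩, ?_⟩, ?_⟩
    · intro v hv
      have hv' : min (f v) 2 = 0 := hv
      have hfv : f v = 0 := by omega
      rcases hf0 v hfv with ⟨u, hadj, hu⟩ | ⟨u, w, _, hadju, _, hu, _⟩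
      · exact ⟨u, hadj, show min (f u) 2 = 2 by omega⟩
      · exact ⟨u, hadju, show min (f u) 2 = 2 by omega⟩
    · have hset : {v | min (f v) 2 = 0} = {v | f v = 0} := by
        ext x; simp only [Set.mem_setOf_eq]; omega
      rw [hset]; exact hfnd
    · rw [← hfw]
      exact Finset.sum_lt_sum (fun i _ => min_le_left _ _)
        ⟨w3, Finset.mem_univ _, show min (f w3) 2 < f w3 by omega⟩
  · push_neg at h3
    have h2 : ∃ v, f v = 2 := by
      by_contra h
      push_neg at h
      have hv := hf3 v0
      rcases (by have := h3 v0; have := h v0; omega : f v0 = 0 ∨ f v0 = 1) with h0 | h1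
      · rcases hf0 v0 h0 with ⟨u, _, hu⟩ | ⟨u, _, _, _, _, hu, _⟩
        · exact h3 u hu
        · exact h u hu
      · obtain ⟨u, _, hu⟩ := hf1 v0 h1
        rcases hu with h' | h'
        · exact h u h'
        · exact h3 u h'
    obtain ⟨v2, hv2⟩ := h2
    refine ⟨Function.update f v2 1, ⟨⟨?_, ?_⟩, ?_⟩, ?_⟩
    · intro v
      by_cases hv : v = v2
      · subst hv; rw [Function.update_self]; omega
      · rw [Function.update_of_ne hv]
        have := hf3 v; have := h3 v; omega
    · intro v hv
      have hvne : v ≠ v2 := by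
        intro h; rw [h, Function.update_self] at hv; omega
      rw [Function.update_of_ne hvne] at hv
      rcases hf0 v hv with ⟨u, _, hu⟩ | ⟨u, w, huw, hadju, hadjw, hu, hw⟩
      · exact absurd hu (h3 u)
      · by_cases huv : u = v2
        · have hwv : w ≠ v2 := by rw [← huv]; exact huw.symm
          exact ⟨w, hadjw, by rw [Function.update_of_ne hwv]; exact hw⟩
        · exact ⟨u, hadju, by rw [Function.update_of_ne huv]; exact hu⟩
    · have hset : {v | Function.update f v2 1 v = 0} = {v | f v = 0} := by
        ext x
        by_cases hx : x = v2
        · subst hx; simp [Function.update_self, hv2]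
        · simp [Function.update_of_ne hx]
      rw [hset]; exact hfnd
    · rw [← hfw]
      refine Finset.sum_lt_sum (fun i _ => ?_) ⟨v2, Finset.mem_univ _, ?_⟩
      · by_cases hi : i = v2
        · subst hi; simp [hv2]
        · rw [Function.update_of_ne hi]
      · simp [hv2]
end

section
/- For any graph G, γ_m(G) ≤ γ_dR^m(G) ≤ 3·γ_m(G), where γ_m(G) is the maximal domination number. -/
open Finset
open scoped Classical

lemma mdrdf_to_maxdom {V : Type*} [Fintype V] {G : SimpleGraph V} {f : V → ℕ}
    (hf : IsMDRDF G f) :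
    IsMaxDomSet G {v | f v ≠ 0} ∧ ({v | f v ≠ 0} : Set V).ncard ≤ ∑ v, f v := by
  classical
  obtain ⟨⟨_, h0, _⟩, hnd⟩ := hf
  constructor
  · constructor
    · intro v hv
      simp only [Set.mem_setOf_eq, not_not] at hv
      rcases h0 v hv with ⟨u, hadj, hu⟩ | ⟨u, w, _, hadj, _, hu, _⟩
      · exact ⟨u, by simp [hu], hadj⟩
      · exact ⟨u, by simp [hu], hadj⟩
    · intro hc
      apply hnd
      intro v hv
      rcases hc v (by simpa using hv) with ⟨u, hu, hadj⟩
      exact ⟨u, by simpa using hu, hadj⟩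
  · have h1 : ({v | f v ≠ 0} : Set V).ncard
        = (Finset.univ.filter fun v => f v ≠ 0).card := by
      rw [Set.ncard_eq_toFinset_card']
      congr 1
      ext v; simp
    rw [h1]
    calc (Finset.univ.filter fun v => f v ≠ 0).card
        = ∑ v ∈ Finset.univ.filter fun v => f v ≠ 0, 1 := by
          simp
      _ ≤ ∑ v ∈ Finset.univ.filter fun v => f v ≠ 0, f v := by
          apply Finset.sum_le_sum
          intro v hv
          simp only [Finset.mem_filter] at hv
          omega
      _ ≤ ∑ v, f v := Finset.sum_le_sum_of_subset (Finset.filter_subset _ _)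

lemma maxdom_to_mdrdf {V : Type*} [Fintype V] {G : SimpleGraph V} {S : Set V}
    (hS : IsMaxDomSet G S) :
    IsMDRDF G (fun v => if v ∈ S then 3 else 0) ∧
    (∑ v, (if v ∈ S then 3 else 0)) = 3 * S.ncard := by
  classical
  obtain ⟨hdom, hnd⟩ := hS
  refine ⟨⟨⟨?_, ?_, ?_⟩, ?_⟩, ?_⟩
  · intro v; dsimp only; split <;> omega
  · intro v hv
    by_cases h : v ∈ S
    · simp [h] at hv
    · obtain ⟨u, hu, hadj⟩ := hdom v h
      exact Or.inl ⟨u, hadj, by simp [hu]⟩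
  · intro v hv
    dsimp only at hv
    split at hv <;> omega
  · intro hc
    apply hnd
    intro v hv
    have hvS : v ∈ S := by simpa using hv
    have hv' : v ∉ {w | (fun w => if w ∈ S then 3 else 0) w = 0} := by
      simp [hvS]
    rcases hc v hv' with ⟨u, hu, hadj⟩
    simp only [Set.mem_setOf_eq] at hu
    refine ⟨u, ?_, hadj⟩
    simp only [Set.mem_compl_iff]
    intro hus
    simp [hus] at hu
  · have : S.ncard = (Finset.univ.filter fun v => v ∈ S).card := by
      rw [Set.ncard_eq_toFinset_card']
      congr 1
      ext v; simp
    rw [this, Finset.sum_ite, Finset.sum_const, Finset.sum_const_zero]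
    simp [mul_comm]

theorem stmt7 {V : Type*} [Fintype V] (G : SimpleGraph V) :
    maxDomNum G ≤ mdrdNum G ∧ mdrdNum G ≤ 3 * maxDomNum G := by
  classical
  by_cases h : ∃ S : Set V, IsMaxDomSet G S
  · obtain ⟨S0, hS0⟩ := h
    have hDne : {k | ∃ S : Set V, IsMaxDomSet G S ∧ S.ncard = k}.Nonempty :=
      ⟨S0.ncard, S0, hS0, rfl⟩
    have hMne : {w | ∃ f, IsMDRDF G f ∧ ∑ v, f v = w}.Nonempty := by
      obtain ⟨hf, hsum⟩ := maxdom_to_mdrdf hS0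
      exact ⟨_, _, hf, rfl⟩
    constructor
    · obtain ⟨f, hf, hsum⟩ := Nat.sInf_mem hMne
      obtain ⟨hmax, hcard⟩ := mdrdf_to_maxdom hf
      calc maxDomNum G ≤ ({v | f v ≠ 0} : Set V).ncard :=
            Nat.sInf_le ⟨_, hmax, rfl⟩
        _ ≤ ∑ v, f v := hcard
        _ = mdrdNum G := hsum
    · obtain ⟨S, hS, hcard⟩ := Nat.sInf_mem hDne
      obtain ⟨hf, hsum⟩ := maxdom_to_mdrdf hS
      calc mdrdNum G ≤ ∑ v, (if v ∈ S then 3 else 0) := Nat.sInf_le ⟨_, hf, rfl⟩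
        _ = 3 * S.ncard := hsum
        _ = 3 * maxDomNum G := by rw [hcard]; rfl
  · have hM : {w | ∃ f, IsMDRDF G f ∧ ∑ v, f v = w} = ∅ := by
      ext w
      simp only [Set.mem_setOf_eq, Set.mem_empty_iff_false, iff_false]
      rintro ⟨f, hf, -⟩
      exact h ⟨_, (mdrdf_to_maxdom hf).1⟩
    have hD : {k | ∃ S : Set V, IsMaxDomSet G S ∧ S.ncard = k} = ∅ := by
      ext k
      simp only [Set.mem_setOf_eq, Set.mem_empty_iff_false, iff_false]
      rintro ⟨S, hS, -⟩
      exact h ⟨S, hS⟩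
    simp [maxDomNum, mdrdNum, hM, hD]
end

section
/- For any graph G, γ_m(G) + 1 ≤ γ_dR^m(G) ≤ 3·γ_m(G) − 1. -/
open Finset

theorem stmt8 {V : Type*} [Fintype V] [Nonempty V] (G : SimpleGraph V) :
    maxDomNum G + 1 ≤ mdrdNum G ∧ mdrdNum G ≤ 3 * maxDomNum G - 1 := by
  classical
  constructor
  · -- lower bound
    have hne : {w | ∃ f, IsMDRDF G f ∧ ∑ v, f v = w}.Nonempty := by
      refine ⟨Fintype.card V * 3, fun _ => 3,
        ⟨⟨fun v => le_refl 3, fun v h => by simp at h, fun v h => by simp at h⟩, ?_⟩,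
        by simp [Finset.sum_const, mul_comm]⟩
      intro hd
      obtain ⟨v⟩ := ‹Nonempty V›
      obtain ⟨u, hu, _⟩ := hd v (by simp)
      simp at hu
    have hm : mdrdNum G ∈ {w | ∃ f, IsMDRDF G f ∧ ∑ v, f v = w} := Nat.sInf_mem hne
    obtain ⟨f, ⟨⟨hf3, hf0, hf1⟩, hnd⟩, hsum⟩ := hm
    set T : Finset V := Finset.univ.filter (fun v => f v ≠ 0) with hT
    obtain ⟨v⟩ := ‹Nonempty V›
    have hv2 : ∃ v0, 2 ≤ f v0 := by
      rcases (by omega : f v = 0 ∨ f v = 1 ∨ 2 ≤ f v) with h | h | h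
      · rcases hf0 v h with ⟨u, _, hu3⟩ | ⟨u, w, _, _, _, hu2, _⟩
        · exact ⟨u, by omega⟩
        · exact ⟨u, by omega⟩
      · obtain ⟨u, _, hu⟩ := hf1 v h
        exact ⟨u, by omega⟩
      · exact ⟨v, h⟩
    obtain ⟨v0, hv0⟩ := hv2
    have hv0T : v0 ∈ T := by simp [hT]; omega
    have hkey : T.card + 1 ≤ ∑ u, f u := by
      have h1 : ∑ u, f u = f v0 + ∑ u ∈ Finset.univ.erase v0, f u :=
        (Finset.add_sum_erase _ f (Finset.mem_univ v0)).symm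
      have h2 : ∑ u ∈ T.erase v0, f u ≤ ∑ u ∈ Finset.univ.erase v0, f u :=
        Finset.sum_le_sum_of_subset (Finset.erase_subset_erase _ (Finset.subset_univ T))
      have h3 : (T.erase v0).card ≤ ∑ u ∈ T.erase v0, f u := by
        calc (T.erase v0).card = ∑ u ∈ T.erase v0, 1 := by simp
        _ ≤ _ := Finset.sum_le_sum (fun u hu => by
            have hu' : u ∈ T := Finset.mem_of_mem_erase hu
            simp [hT] at hu'; omega)
      have h4 : (T.erase v0).card = T.card - 1 := Finset.card_erase_of_mem hv0T
      have hc : 1 ≤ T.card := Finset.card_pos.mpr ⟨v0, hv0T⟩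
      omega
    have hmax : IsMaxDomSet G (↑T : Set V) := by
      constructor
      · intro u hu
        have hu0 : f u = 0 := by
          by_contra h
          exact hu (by simp only [Finset.coe_filter, Set.mem_setOf_eq, hT]; simp [h])
        rcases hf0 u hu0 with ⟨w, hadj, hw⟩ | ⟨w, _, _, hadj, _, hw, _⟩
        · exact ⟨w, by simp [hT, hw], hadj⟩
        · exact ⟨w, by simp [hT, hw], hadj⟩
      · intro hd
        apply hnd
        intro u hu
        have huT : f u ≠ 0 := by simpa using hu
        have hu' : u ∉ (↑T : Set V)ᶜ := by simp [hT, huT]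
        obtain ⟨w, hw, hadj⟩ := hd u hu'
        refine ⟨w, ?_, hadj⟩
        simp [hT] at hw
        simpa using hw
    have hle : maxDomNum G ≤ T.card :=
      Nat.sInf_le ⟨↑T, hmax, Set.ncard_coe_finset T⟩
    omega
  · -- upper bound
    have hneS : {k | ∃ S : Set V, IsMaxDomSet G S ∧ S.ncard = k}.Nonempty := by
      refine ⟨(Set.univ : Set V).ncard, Set.univ,
        ⟨fun v hv => absurd (Set.mem_univ v) hv, ?_⟩, rfl⟩
      intro hd
      obtain ⟨v⟩ := ‹Nonempty V›
      obtain ⟨u, hu, _⟩ := hd v (by simp)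
      simp at hu
    have hm : maxDomNum G ∈ {k | ∃ S : Set V, IsMaxDomSet G S ∧ S.ncard = k} :=
      Nat.sInf_mem hneS
    obtain ⟨S, ⟨hdom, hnd⟩, hcard⟩ := hm
    have hnd' := hnd
    rw [IsDomSet] at hnd'
    push_neg at hnd'
    obtain ⟨v, hvS, hv⟩ := hnd'
    have hvS' : v ∈ S := by simpa using hvS
    set f : V → ℕ := fun u => if u = v then 2 else if u ∈ S then 3 else 0 with hf
    have hzero : {u | f u = 0} = Sᶜ := by
      ext u
      by_cases h1 : u = v
      · subst h1; simp [hf, hvS']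
      · by_cases h2 : u ∈ S <;> simp [hf, h1, h2]
    have hmem : IsMDRDF G f := by
      refine ⟨⟨fun u => by simp only [hf]; split_ifs <;> omega, ?_, ?_⟩, ?_⟩
      · intro u hu
        have h1 : u ≠ v := by intro h; subst h; simp [hf] at hu
        have h2 : u ∉ S := by intro h; simp [hf, h1, h] at hu
        obtain ⟨w, hwS, hadj⟩ := hdom u h2
        have hwv : w ≠ v := by
          intro h; subst h
          exact hv u (by simpa using h2) hadj.symm
        exact Or.inl ⟨w, hadj, by simp [hf, hwv, hwS]⟩
      · intro u hu
        simp only [hf] at hu; split_ifs at hu <;> omega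
      · rw [hzero]; exact hnd
    have hS1 : 1 ≤ S.ncard := by
      have : S.Nonempty := ⟨v, hvS'⟩
      have := Set.ncard_pos (Set.toFinite S) |>.mpr this
      omega
    have hsum : ∑ u, f u = 3 * S.ncard - 1 := by
      have h1 : ∑ u, f u = f v + ∑ u ∈ Finset.univ.erase v, f u :=
        (Finset.add_sum_erase _ f (Finset.mem_univ v)).symm
      have h2 : ∑ u ∈ Finset.univ.erase v, f u
          = ∑ u ∈ Finset.univ.erase v, (if u ∈ S then 3 else 0) := by
        refine Finset.sum_congr rfl (fun u hu => ?_)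
        have := Finset.ne_of_mem_erase hu
        simp [hf, this]
      have h3 : ∑ u ∈ Finset.univ.erase v, (if u ∈ S then 3 else 0)
          = 3 * ((Finset.univ.erase v).filter (· ∈ S)).card := by
        rw [← Finset.sum_filter]
        simp [Finset.sum_const, mul_comm]
      have h4 : (Finset.univ.erase v).filter (· ∈ S) = S.toFinset.erase v := by
        ext u
        simp [Finset.mem_erase, Finset.mem_filter, Set.mem_toFinset, and_comm]
      have h5 : (S.toFinset.erase v).card = S.toFinset.card - 1 :=
        Finset.card_erase_of_mem (by simpa using hvS')
      have h45 : ((Finset.univ.erase v).filter (· ∈ S)).card = S.toFinset.card - 1 := by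
        rw [h4]; exact h5
      have h6 : S.toFinset.card = S.ncard := (Set.ncard_eq_toFinset_card' S).symm
      have hfv : f v = 2 := by simp [hf]
      omega
    have hle : mdrdNum G ≤ 3 * S.ncard - 1 :=
      Nat.sInf_le ⟨f, hmem, by rw [hsum]⟩
    omega
end

section
/- For any graph G without isolated vertices, γ_dR^m(G) ≤ 3·γ_m(G) − 2. -/
open Finset

/- A maximal dominating set `S` contains a vertex `v` whose whole neighbourhood lies in `S`
(otherwise `Sᶜ` would dominate). Assigning `1` to `v`, `3` to the rest of `S` and `0` elsewhere is
a double Roman dominating function: vertices outside `S` see a `3` (their dominator is not `v`),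
and `v` sees a `3` because it is not isolated. Its `0`-set misses every neighbour of `v`, so it is
not dominating, and its weight is `3 |S| - 2`. -/

section

variable {V : Type*} {G : SimpleGraph V}

theorem IsMaxDomSet.exists_neighborSet_subset {S : Set V} (hS : IsMaxDomSet G S) :
    ∃ v ∈ S, G.neighborSet v ⊆ S := by
  obtain ⟨-, hnd⟩ := hS
  simp only [IsDomSet, not_forall, not_exists, not_and, Set.notMem_compl_iff] at hnd
  obtain ⟨v, hvS, hv⟩ := hnd
  exact ⟨v, hvS, fun u hu => by_contra fun huS => hv u huS hu⟩

theorem isMaxDomSet_univ [Nonempty V] : IsMaxDomSet G Set.univ := by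
  refine ⟨fun v hv => absurd (Set.mem_univ v) hv, fun hd => ?_⟩
  obtain ⟨u, hu, -⟩ := hd (Classical.arbitrary V) (by simp)
  exact hu (Set.mem_univ u)

theorem mdrdNum_eq_zero_of_isEmpty [Fintype V] [IsEmpty V] : mdrdNum G = 0 := by
  have hnone : {w | ∃ f, IsMDRDF G f ∧ ∑ v, f v = w} = ∅ :=
    Set.eq_empty_of_forall_notMem fun _ ⟨_, ⟨_, hnd⟩, _⟩ => hnd fun v => isEmptyElim v
  rw [mdrdNum, hnone, Nat.sInf_empty]

open Classical in
noncomputable def domSetDRDF (S : Set V) (v : V) : V → ℕ :=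
  fun x => if x = v then 1 else if x ∈ S then 3 else 0

theorem isMDRDF_domSetDRDF {S : Set V} {v : V} (hdom : IsDomSet G S) (hvS : v ∈ S)
    (hNv : G.neighborSet v ⊆ S) (hv : ∃ u, G.Adj v u) : IsMDRDF G (domSetDRDF S v) := by
  have hS3 : ∀ x ∈ S, x ≠ v → domSetDRDF S v x = 3 := by
    intro x hx hxv; simp [domSetDRDF, hxv, hx]
  have hzero : ∀ x, domSetDRDF S v x = 0 ↔ x ∉ S := by
    intro x
    by_cases hxv : x = v
    · subst hxv; simp [domSetDRDF, hvS]
    · by_cases hx : x ∈ S <;> simp [domSetDRDF, hxv, hx]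
  refine ⟨⟨fun x => ?_, fun x hx => ?_, fun x hx => ?_⟩, fun hd => ?_⟩
  · unfold domSetDRDF; split_ifs <;> omega
  · have hxS := (hzero x).1 hx
    obtain ⟨u, huS, hxu⟩ := hdom x hxS
    have huv : u ≠ v := by
      rintro rfl
      exact hxS (hNv hxu.symm)
    exact Or.inl ⟨u, hxu, hS3 u huS huv⟩
  · have hxv : x = v := by
      by_contra hxv
      unfold domSetDRDF at hx
      split_ifs at hx
      omega
    subst hxv
    obtain ⟨u, hxu⟩ := hv
    exact ⟨u, hxu, Or.inr (hS3 u (hNv hxu) hxu.ne.symm)⟩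
  · obtain ⟨u, hu0, hvu⟩ := hd v (by simp [domSetDRDF])
    exact (hzero u).1 hu0 (hNv hvu)

theorem sum_domSetDRDF [Fintype V] {S : Set V} {v : V} (hvS : v ∈ S) :
    ∑ x, domSetDRDF S v x + 2 = 3 * S.ncard := by
  classical
  have hpoint : ∀ x, domSetDRDF S v x + (if x = v then 2 else 0) = if x ∈ S then 3 else 0 := by
    intro x
    by_cases hxv : x = v
    · subst hxv; simp [domSetDRDF, hvS]
    · by_cases hx : x ∈ S <;> simp [domSetDRDF, hxv, hx]
  calc ∑ x, domSetDRDF S v x + 2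
      = ∑ x, (domSetDRDF S v x + if x = v then 2 else 0) := by
        rw [Finset.sum_add_distrib, Finset.sum_ite_eq']; simp
    _ = ∑ x, if x ∈ S then 3 else 0 := Finset.sum_congr rfl fun x _ => hpoint x
    _ = 3 * S.ncard := by
        rw [Finset.sum_ite, Finset.sum_const_zero, Finset.sum_const, smul_eq_mul,
          Set.ncard_eq_toFinset_card', Set.filter_mem_univ_eq_toFinset]
        ring

theorem mdrdNum_le_of_isMaxDomSet [Fintype V] (h : ∀ v, ∃ u, G.Adj v u) {S : Set V}
    (hS : IsMaxDomSet G S) : mdrdNum G ≤ 3 * S.ncard - 2 := by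
  obtain ⟨v, hvS, hNv⟩ := hS.exists_neighborSet_subset
  refine Nat.sInf_le ⟨domSetDRDF S v, isMDRDF_domSetDRDF hS.1 hvS hNv (h v), ?_⟩
  have := sum_domSetDRDF hvS
  omega

end

theorem stmt9 {V : Type*} [Fintype V] (G : SimpleGraph V)
    (h : ∀ v, ∃ u, G.Adj v u) :
    mdrdNum G ≤ 3 * maxDomNum G - 2 := by
  cases isEmpty_or_nonempty V
  · rw [mdrdNum_eq_zero_of_isEmpty]
    exact Nat.zero_le _
  · obtain ⟨S, hS, hcard⟩ : maxDomNum G ∈ {k | ∃ S : Set V, IsMaxDomSet G S ∧ S.ncard = k} :=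
      Nat.sInf_mem ⟨_, Set.univ, isMaxDomSet_univ, rfl⟩
    rw [← hcard]
    exact mdrdNum_le_of_isMaxDomSet h hS
end

section
/- For any graph G without isolated vertices, γ_dR^m(G) ≤ γ_dR(G) + δ(G), where δ(G) is the minimum degree of G. -/
open Finset

theorem stmt10 {V : Type*} [Fintype V] (G : SimpleGraph V) [DecidableRel G.Adj]
    (h : ∀ v, ∃ u, G.Adj v u) :
    mdrdNum G ≤ drdNum G + G.minDegree := by
  classical
  by_cases hV : Nonempty V
  case neg =>
    have hempty : IsEmpty V := not_nonempty_iff.mp hV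
    have hz : mdrdNum G = 0 := by
      rw [mdrdNum]
      convert Nat.sInf_empty
      ext w
      simp only [Set.mem_setOf_eq, Set.mem_empty_iff_false, iff_false]
      rintro ⟨f, ⟨_, hnd⟩, _⟩
      exact hnd (fun x _ => (hempty.false x).elim)
    omega
  case pos =>
    obtain ⟨v, hv⟩ := G.exists_minimal_degree_vertex
    have hne : {w | ∃ f, IsDRDF G f ∧ ∑ x, f x = w}.Nonempty := by
      refine ⟨∑ _x : V, 3, fun _ => 3, ⟨fun _ => le_refl 3, ?_, ?_⟩, rfl⟩
      · intro x hx; exact absurd hx (by simp)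
      · intro x hx; exact absurd hx (by simp)
    obtain ⟨f, hf, hsum⟩ := Nat.sInf_mem hne
    set S : Finset V := Finset.univ.filter (fun x => f x = 0 ∧ (x = v ∨ G.Adj v x)) with hS
    have hmemS : ∀ x, x ∈ S ↔ f x = 0 ∧ (x = v ∨ G.Adj v x) := by
      intro x; simp [hS]
    set g : V → ℕ := fun x => f x + (if x ∈ S then 1 else 0) with hg
    have hgf : ∀ x, f x ≠ 0 → g x = f x := by
      intro x hx
      have hxS : x ∉ S := fun hmem => hx ((hmemS x).1 hmem).1
      simp [hg, hxS]
    have hg0 : ∀ x, g x = 0 → f x = 0 ∧ x ∉ S := by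
      intro x hx
      by_cases hmem : x ∈ S
      · simp [hg, hmem] at hx
      · simp [hg, hmem] at hx
        exact ⟨hx, hmem⟩
    have hgDRDF : IsDRDF G g := by
      refine ⟨?_, ?_, ?_⟩
      · intro x
        by_cases hmem : x ∈ S
        · have : f x = 0 := ((hmemS x).1 hmem).1
          simp [hg, hmem, this]
        · simp [hg, hmem]
          exact hf.1 x
      · intro x hx0
        obtain ⟨hfx, _⟩ := hg0 x hx0
        rcases hf.2.1 x hfx with ⟨u, hu, hu3⟩ | ⟨u, w, huw, hu, hw, hu2, hw2⟩
        · exact Or.inl ⟨u, hu, by rw [hgf u (by simp [hu3])]; exact hu3⟩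
        · exact Or.inr ⟨u, w, huw, hu, hw,
            by rw [hgf u (by simp [hu2])]; exact hu2,
            by rw [hgf w (by simp [hw2])]; exact hw2⟩
      · intro x hx1
        by_cases hmem : x ∈ S
        · have hfx : f x = 0 := ((hmemS x).1 hmem).1
          rcases hf.2.1 x hfx with ⟨u, hu, hu3⟩ | ⟨u, w, huw, hu, hw, hu2, hw2⟩
          · exact ⟨u, hu, Or.inr (by rw [hgf u (by simp [hu3])]; exact hu3)⟩
          · exact ⟨u, hu, Or.inl (by rw [hgf u (by simp [hu2])]; exact hu2)⟩
        · have hfx : f x = 1 := by simpa [hg, hmem] using hx1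
          obtain ⟨u, hu, hval⟩ := hf.2.2 x hfx
          refine ⟨u, hu, ?_⟩
          rcases hval with h2 | h3
          · exact Or.inl (by rw [hgf u (by simp [h2])]; exact h2)
          · exact Or.inr (by rw [hgf u (by simp [h3])]; exact h3)
    have hnotdom : ¬ IsDomSet G {x | g x = 0} := by
      intro hdom
      have hv0 : v ∉ {x | g x = 0} := by
        simp only [Set.mem_setOf_eq]
        by_cases hfv : f v = 0
        · have hvS : v ∈ S := (hmemS v).2 ⟨hfv, Or.inl rfl⟩
          simp [hg, hvS]
        · rw [hgf v hfv]; exact hfv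
      obtain ⟨u, hu0, hadj⟩ := hdom v hv0
      obtain ⟨hfu, huS⟩ := hg0 u hu0
      exact huS ((hmemS u).2 ⟨hfu, Or.inr hadj⟩)
    have hTsub : S ⊆ insert v (G.neighborFinset v) := by
      intro x hx
      rcases ((hmemS x).1 hx).2 with rfl | hadj
      · exact Finset.mem_insert_self _ _
      · exact Finset.mem_insert_of_mem ((G.mem_neighborFinset v x).2 hadj)
    have hwit : ∃ w ∈ insert v (G.neighborFinset v), w ∉ S := by
      by_cases hfv : f v = 0
      · rcases hf.2.1 v hfv with ⟨u, hu, hu3⟩ | ⟨u, w, huw, hu, hw, hu2, hw2⟩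
        · refine ⟨u, Finset.mem_insert_of_mem ((G.mem_neighborFinset v u).2 hu), ?_⟩
          intro hmem; have h0 := ((hmemS u).1 hmem).1; rw [h0] at hu3; exact absurd hu3 (by simp)
        · refine ⟨u, Finset.mem_insert_of_mem ((G.mem_neighborFinset v u).2 hu), ?_⟩
          intro hmem; have h0 := ((hmemS u).1 hmem).1; rw [h0] at hu2; exact absurd hu2 (by simp)
      · refine ⟨v, Finset.mem_insert_self _ _, ?_⟩
        intro hmem; exact hfv ((hmemS v).1 hmem).1
    obtain ⟨w, hwT, hwS⟩ := hwit
    have hcard : S.card < (insert v (G.neighborFinset v)).card :=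
      Finset.card_lt_card ⟨hTsub, fun hsup => hwS (hsup hwT)⟩
    have hcard2 : (insert v (G.neighborFinset v)).card ≤ G.minDegree + 1 := by
      rw [hv]; exact Finset.card_insert_le _ _
    have hScard : S.card ≤ G.minDegree := Nat.lt_succ_iff.mp (lt_of_lt_of_le hcard hcard2)
    have hsumite : ∀ (T : Finset V), ∑ x : V, (if x ∈ T then (1:ℕ) else 0) = T.card := by
      intro T
      rw [Finset.sum_ite_mem, Finset.univ_inter, Finset.sum_const, smul_eq_mul, mul_one]
    have hsumg : ∑ x, g x = (∑ x, f x) + S.card := by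
      rw [hg, Finset.sum_add_distrib, hsumite S]
    have hle : mdrdNum G ≤ ∑ x, g x :=
      Nat.sInf_le ⟨g, ⟨hgDRDF, hnotdom⟩, rfl⟩
    rw [hsumg, hsum] at hle
    calc mdrdNum G ≤ sInf {w | ∃ f, IsDRDF G f ∧ ∑ x, f x = w} + S.card := hle
      _ ≤ drdNum G + G.minDegree := by rw [drdNum]; exact Nat.add_le_add_left hScard _
end

section
/- Let G be a connected graph of order n with diameter at least 4. Then γ_dR^m(G) ≤ 2(n − δ(G)), where δ(G) is the minimum degree of G. -/
open Finset

theorem stmt11 {V : Type*} [Fintype V] (G : SimpleGraph V) [DecidableRel G.Adj]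
    (hconn : G.Connected) (hdiam : 4 ≤ G.diam) :
    mdrdNum G ≤ 2 * (Fintype.card V - G.minDegree) := by
  classical
  have : Nonempty V := hconn.nonempty
  obtain ⟨x, y, hxy⟩ := G.exists_dist_eq_diam
  have hd4 : 4 ≤ G.dist x y := hxy ▸ hdiam
  have hne : x ≠ y := by
    intro h; rw [h, SimpleGraph.dist_self] at hd4; omega
  -- adjacency to x gives distance bound facts
  have hadjdist : ∀ a b : V, G.Adj a b → G.dist a b = 1 := fun a b h =>
    SimpleGraph.dist_eq_one_iff_adj.mpr h
  have hynadjx : ¬ G.Adj x y := by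
    intro h; have := hadjdist x y h; omega
  have hy_far : ∀ a : V, G.Adj x a → ¬ G.Adj y a := by
    intro a ha hya
    have h1 := hconn.dist_triangle (u := x) (v := a) (w := y)
    have h2 := hadjdist x a ha
    have h3 := hadjdist a y hya.symm
    omega
  -- a neighbor u of y with dist x u ≥ 3
  obtain ⟨p⟩ : G.Reachable y x := hconn.preconnected y x
  have hpnil : ¬ p.Nil := SimpleGraph.Walk.not_nil_of_ne (Ne.symm hne)
  set u : V := p.getVert 1 with hu
  have hadjyu : G.Adj y u := p.adj_snd hpnil
  have hufar : 3 ≤ G.dist x u := by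
    have h1 := hconn.dist_triangle (u := x) (v := u) (w := y)
    have h2 := hadjdist u y hadjyu.symm
    omega
  have hux : u ≠ x := by
    intro h; rw [h, SimpleGraph.dist_self] at hufar; omega
  have huy : u ≠ y := fun h => G.irrefl (h ▸ hadjyu)
  have hunadjx : ¬ G.Adj x u := by
    intro h; have := hadjdist x u h; omega
  -- the function
  set f : V → ℕ := fun v => if v = x then 3 else if v = y then 1 else if G.Adj x v then 0 else 2
    with hf
  have hfx : f x = 3 := by simp [hf]
  have hfy : f y = 1 := by simp [hf, Ne.symm hne]
  have hfu : f u = 2 := by simp [hf, hux, huy, hunadjx]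
  have hf0 : ∀ v, f v = 0 → G.Adj x v := by
    intro v hv
    simp only [hf] at hv
    split_ifs at hv with h1 h2 h3
    · exact h3
  have hfA : ∀ v, G.Adj x v → f v = 0 := by
    intro v hv
    have hvx : v ≠ x := fun h => G.irrefl (h ▸ hv)
    have hvy : v ≠ y := fun h => hynadjx (h ▸ hv)
    simp [hf, hvx, hvy, hv]
  -- f is an MDRDF
  have hM : IsMDRDF G f := by
    refine ⟨⟨?_, ?_, ?_⟩, ?_⟩
    · intro v; simp only [hf]; split_ifs <;> omega
    · intro v hv
      exact Or.inl ⟨x, (hf0 v hv).symm, hfx⟩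
    · intro v hv
      have hvy : v = y := by
        simp only [hf] at hv
        split_ifs at hv <;> first | assumption | omega
      exact ⟨u, hvy ▸ hadjyu, Or.inl hfu⟩
    · intro hdom
      obtain ⟨w, hw, hadj⟩ := hdom y (by simp [Set.mem_setOf_eq, hfy])
      exact hy_far w (hf0 w hw) hadj
  -- the weight
  set A : Finset V := G.neighborFinset x with hA
  have hxA : x ∉ A := by simp [hA]
  have hyA : y ∉ A := by simp [hA, hynadjx]
  set T : Finset V := insert x (insert y A) with hT
  have hcardT : T.card = G.degree x + 2 := by
    rw [hT, Finset.card_insert_of_notMem (by simp [hne, hxA]),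
      Finset.card_insert_of_notMem hyA, SimpleGraph.card_neighborFinset_eq_degree]
  have hsumT : ∑ v ∈ T, f v = 4 := by
    rw [hT, Finset.sum_insert (by simp [hne, hxA]), Finset.sum_insert hyA, hfx, hfy,
      Finset.sum_eq_zero (fun v hv => hfA v (by simpa [hA] using hv))]
    norm_num
  have hsumC : ∑ v ∈ Finset.univ \ T, f v = 2 * (Finset.univ \ T).card := by
    rw [Finset.sum_congr rfl (g := fun _ => 2), Finset.sum_const, smul_eq_mul, Nat.mul_comm]
    intro v hv
    simp only [Finset.mem_sdiff, hT, Finset.mem_insert, hA, SimpleGraph.mem_neighborFinset] at hv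
    push_neg at hv
    simp [hf, hv.2.1, hv.2.2.1, hv.2.2.2]
  have hTcardle : T.card ≤ Fintype.card V := Finset.card_le_card (Finset.subset_univ T)
  have hsum : ∑ v, f v = 4 + 2 * (Fintype.card V - (G.degree x + 2)) := by
    rw [← Finset.sum_sdiff (Finset.subset_univ T), hsumT, hsumC,
      Finset.card_sdiff_of_subset (Finset.subset_univ T), Finset.card_univ, hcardT, Nat.add_comm]
  have hmin : G.minDegree ≤ G.degree x := G.minDegree_le_degree x
  have hle : ∑ v, f v ≤ 2 * (Fintype.card V - G.minDegree) := by
    rw [hsum]; rw [hcardT] at hTcardle; omega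
  calc mdrdNum G ≤ ∑ v, f v := Nat.sInf_le ⟨f, hM, rfl⟩
    _ ≤ _ := hle
end

section
/- For every nontrivial tree T, γ_dR(T) ≤ γ_dR^m(T) ≤ γ_dR(T) + 1. -/
open Finset

/-- Every nontrivial tree has a leaf. -/
lemma exists_leaf {V : Type*} [Fintype V] (T : SimpleGraph V)
    (htree : T.IsTree) (hn : 2 ≤ Fintype.card V) :
    ∃ u s, T.Adj u s ∧ ∀ w, T.Adj u w → w = s := by
  classical
  have hdeg1 : ∀ v : V, 1 ≤ T.degree v := by
    intro v
    rw [Nat.one_le_iff_ne_zero, ← Nat.pos_iff_ne_zero, T.degree_pos_iff_exists_adj]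
    obtain ⟨w, hw⟩ := Fintype.exists_ne_of_one_lt_card (by omega) v
    obtain ⟨p⟩ := htree.isConnected.preconnected v w
    cases p with
    | nil => exact absurd rfl hw.symm
    | cons h q => exact ⟨_, h⟩
  have hsum : ∑ v, T.degree v = 2 * (Fintype.card V - 1) := by
    rw [T.sum_degrees_eq_twice_card_edges, ← htree.card_edgeFinset]
    omega
  have hex : ∃ v : V, T.degree v ≤ 1 := by
    by_contra h
    push_neg at h
    have h2 : ∀ v : V, 2 ≤ T.degree v := fun v => h v
    have : Fintype.card V * 2 ≤ ∑ v, T.degree v := by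
      calc Fintype.card V * 2 = ∑ _v : V, 2 := by
            rw [Finset.sum_const, smul_eq_mul, Finset.card_univ]
        _ ≤ ∑ v, T.degree v := Finset.sum_le_sum fun v _ => h2 v
    rw [hsum] at this
    omega
  obtain ⟨u, hu⟩ := hex
  have hdu : T.degree u = 1 := le_antisymm hu (hdeg1 u)
  rw [← T.card_neighborFinset_eq_degree, Finset.card_eq_one] at hdu
  obtain ⟨s, hs⟩ := hdu
  refine ⟨u, s, ?_, ?_⟩
  · have : s ∈ T.neighborFinset u := hs ▸ Finset.mem_singleton_self s
    exact (T.mem_neighborFinset u s).mp this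
  · intro w hw
    have : w ∈ T.neighborFinset u := (T.mem_neighborFinset u w).mpr hw
    rw [hs, Finset.mem_singleton] at this
    exact this

/-- From a DRDF and a leaf, build an MDRDF of weight at most one more. -/
lemma mk_mdrdf {V : Type*} [Fintype V] (T : SimpleGraph V) (u s : V)
    (hus : T.Adj u s) (hleaf : ∀ w, T.Adj u w → w = s)
    (f : V → ℕ) (hf : IsDRDF T f) :
    ∃ g, IsMDRDF T g ∧ ∑ v, g v ≤ ∑ v, f v + 1 := by
  classical
  obtain ⟨hb, h0, h1⟩ := hf
  have hne : u ≠ s := hus.ne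
  rcases Nat.eq_zero_or_pos (f u) with hu0 | hu1
  · -- f u = 0, so f s = 3; set g u := 1
    have hs3 : f s = 3 := by
      rcases h0 u hu0 with ⟨w, hw, hw3⟩ | ⟨a, b, hab, ha, hb', ha2, hb2⟩
      · rwa [hleaf w hw] at hw3
      · exact absurd ((hleaf a ha).trans (hleaf b hb').symm) hab
    refine ⟨Function.update f u 1, ⟨⟨?_, ?_, ?_⟩, ?_⟩, ?_⟩
    · intro v
      rcases eq_or_ne v u with rfl | hvu
      · simp
      · rw [Function.update_of_ne hvu]; exact hb v
    · intro v hv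
      rcases eq_or_ne v u with rfl | hvu
      · simp at hv
      · rw [Function.update_of_ne hvu] at hv
        rcases h0 v hv with ⟨w, hw, hw3⟩ | ⟨a, b, hab, ha, hb', ha2, hb2⟩
        · left
          refine ⟨w, hw, ?_⟩
          have : w ≠ u := by rintro rfl; omega
          rwa [Function.update_of_ne this]
        · right
          have hau : a ≠ u := by rintro rfl; omega
          have hbu : b ≠ u := by rintro rfl; omega
          exact ⟨a, b, hab, ha, hb', by rwa [Function.update_of_ne hau],
            by rwa [Function.update_of_ne hbu]⟩
    · intro v hv
      rcases eq_or_ne v u with rfl | hvu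
      · exact ⟨s, hus, by rw [Function.update_of_ne hne.symm]; omega⟩
      · rw [Function.update_of_ne hvu] at hv
        obtain ⟨w, hw, hw2⟩ := h1 v hv
        have : w ≠ u := by rintro rfl; omega
        exact ⟨w, hw, by rwa [Function.update_of_ne this]⟩
    · intro hdom
      obtain ⟨w, hw0, hadj⟩ := hdom u (by simp [Set.mem_setOf_eq])
      rw [Set.mem_setOf_eq] at hw0
      have := hleaf w hadj
      subst this
      rw [Function.update_of_ne hne.symm] at hw0
      omega
    · rw [Finset.sum_update_of_mem (Finset.mem_univ u)]
      have : ∑ v ∈ Finset.univ \ {u}, f v ≤ ∑ v, f v :=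
        Finset.sum_le_sum_of_subset (Finset.sdiff_subset)
      omega
  · rcases Nat.eq_zero_or_pos (f s) with hs0 | hs1
    · -- f s = 0, f u ≥ 2; set g s := 1
      have hu2 : 2 ≤ f u := by
        rcases Nat.lt_or_ge (f u) 2 with h | h
        · have : f u = 1 := by omega
          obtain ⟨w, hw, hw2⟩ := h1 u this
          rw [hleaf w hw] at hw2
          omega
        · exact h
      refine ⟨Function.update f s 1, ⟨⟨?_, ?_, ?_⟩, ?_⟩, ?_⟩
      · intro v
        rcases eq_or_ne v s with rfl | hvs
        · simp
        · rw [Function.update_of_ne hvs]; exact hb v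
      · intro v hv
        rcases eq_or_ne v s with rfl | hvs
        · simp at hv
        · rw [Function.update_of_ne hvs] at hv
          rcases h0 v hv with ⟨w, hw, hw3⟩ | ⟨a, b, hab, ha, hb', ha2, hb2⟩
          · left
            have : w ≠ s := by rintro rfl; omega
            exact ⟨w, hw, by rwa [Function.update_of_ne this]⟩
          · right
            have hau : a ≠ s := by rintro rfl; omega
            have hbu : b ≠ s := by rintro rfl; omega
            exact ⟨a, b, hab, ha, hb', by rwa [Function.update_of_ne hau],
              by rwa [Function.update_of_ne hbu]⟩
      · intro v hv
        rcases eq_or_ne v s with heq | hvs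
        · subst heq
          rcases h0 v hs0 with ⟨w, hw, hw3⟩ | ⟨a, b, hab, ha, hb', ha2, hb2⟩
          · have hws : w ≠ v := by rintro rfl; omega
            exact ⟨w, hw, by rw [Function.update_of_ne hws]; omega⟩
          · have has : a ≠ v := by rintro rfl; omega
            exact ⟨a, ha, by rw [Function.update_of_ne has]; omega⟩
        · rw [Function.update_of_ne hvs] at hv
          obtain ⟨w, hw, hw2⟩ := h1 v hv
          have : w ≠ s := by rintro rfl; omega
          exact ⟨w, hw, by rwa [Function.update_of_ne this]⟩
      · intro hdom
        obtain ⟨w, hw0, hadj⟩ := hdom u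
          (by rw [Set.mem_setOf_eq, Function.update_of_ne hne]; omega)
        rw [Set.mem_setOf_eq] at hw0
        rw [hleaf w hadj] at hw0
        simp at hw0
      · rw [Finset.sum_update_of_mem (Finset.mem_univ s)]
        have h2 : ∑ v ∈ Finset.univ \ {s}, f v ≤ ∑ v, f v :=
          Finset.sum_le_sum_of_subset (Finset.sdiff_subset)
        omega
    · -- f u ≥ 1 and f s ≥ 1 : f itself is already maximal
      refine ⟨f, ⟨⟨hb, h0, h1⟩, ?_⟩, by omega⟩
      intro hdom
      obtain ⟨w, hw0, hadj⟩ := hdom u (by rw [Set.mem_setOf_eq]; omega)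
      rw [Set.mem_setOf_eq] at hw0
      rw [hleaf w hadj] at hw0
      omega

theorem stmt12 {V : Type*} [Fintype V] (T : SimpleGraph V)
    (htree : T.IsTree) (hn : 2 ≤ Fintype.card V) :
    drdNum T ≤ mdrdNum T ∧ mdrdNum T ≤ drdNum T + 1 := by
  classical
  obtain ⟨u, s, hus, hleaf⟩ := exists_leaf T htree hn
  have hf3 : IsDRDF T (fun _ => 3) := ⟨fun _ => le_refl 3, fun v h => by simp at h,
    fun v h => by simp at h⟩
  have hDne : {w | ∃ f, IsDRDF T f ∧ ∑ v, f v = w}.Nonempty :=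
    ⟨∑ _v : V, 3, fun _ => 3, hf3, rfl⟩
  obtain ⟨f, hf, hfsum⟩ : drdNum T ∈ {w | ∃ f, IsDRDF T f ∧ ∑ v, f v = w} :=
    Nat.sInf_mem hDne
  obtain ⟨g, hg, hgsum⟩ := mk_mdrdf T u s hus hleaf f hf
  have h2 : mdrdNum T ≤ drdNum T + 1 := by
    have hle : mdrdNum T ≤ ∑ v, g v := Nat.sInf_le ⟨g, hg, rfl⟩
    omega
  have hMne : {w | ∃ f, IsMDRDF T f ∧ ∑ v, f v = w}.Nonempty := ⟨∑ v, g v, g, hg, rfl⟩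
  obtain ⟨f', hf', hf'sum⟩ : mdrdNum T ∈ {w | ∃ f, IsMDRDF T f ∧ ∑ v, f v = w} :=
    Nat.sInf_mem hMne
  have h1 : drdNum T ≤ mdrdNum T := Nat.sInf_le ⟨f', hf'.1, hf'sum⟩
  exact ⟨h1, h2⟩
end

section
/- For the path P_n on n ≥ 1 vertices, γ_dR^m(P_n) = n + 1. -/
open Finset

def Adj2 (n i j : ℕ) : Prop := (i + 1 = j ∨ j + 1 = i) ∧ i < n ∧ j < n

def PP (n : ℕ) (F : ℕ → ℕ) : Prop :=
  (∀ i < n, F i = 0 → (∃ j, Adj2 n i j ∧ F j = 3) ∨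
      ∃ j k, j ≠ k ∧ Adj2 n i j ∧ Adj2 n i k ∧ F j = 2 ∧ F k = 2) ∧
  (∀ i < n, F i = 1 → ∃ j, Adj2 n i j ∧ (F j = 2 ∨ F j = 3))

lemma sum_split (F : ℕ → ℕ) {n k : ℕ} (hk : k ≤ n) :
    ∑ i ∈ Finset.range n, F i
      = (∑ i ∈ Finset.range k, F i) + ∑ i ∈ Finset.range (n - k), F (k + i) := by
  have h : n = k + (n - k) := by omega
  rw [← Finset.sum_range_add, ← h]

lemma shiftPP {n : ℕ} {F : ℕ → ℕ} (h : PP n F) (k : ℕ) (hk : k ≤ n)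
    (h0 : k < n → F k = 0 → k + 1 < n ∧ F (k + 1) = 3)
    (h1 : k < n → F k = 1 → k + 1 < n ∧ (F (k + 1) = 2 ∨ F (k + 1) = 3)) :
    PP (n - k) (fun i => F (k + i)) := by
  constructor
  · intro i hi hfi
    rcases Nat.eq_zero_or_pos i with rfl | hip
    · obtain ⟨h1n, h3⟩ := h0 (by omega) (by simpa using hfi)
      exact Or.inl ⟨1, ⟨Or.inl rfl, by omega, by omega⟩, by simpa using h3⟩
    · rcases h.1 (k + i) (by omega) hfi with
        ⟨j, ⟨hadj, _, hjn⟩, hj3⟩ | ⟨j, l, hne, ⟨ha1, _, hjn⟩, ⟨ha2, _, hln⟩, hj2, hl2⟩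
      · refine Or.inl ⟨j - k, ⟨by omega, by omega, by omega⟩, ?_⟩
        have hjk : k + (j - k) = j := by omega
        simpa [hjk] using hj3
      · refine Or.inr ⟨j - k, l - k, by omega, ⟨by omega, by omega, by omega⟩,
          ⟨by omega, by omega, by omega⟩, ?_, ?_⟩
        · have hjk : k + (j - k) = j := by omega
          simpa [hjk] using hj2
        · have hlk : k + (l - k) = l := by omega
          simpa [hlk] using hl2
  · intro i hi hfi
    rcases Nat.eq_zero_or_pos i with rfl | hip
    · obtain ⟨h1n, h3⟩ := h1 (by omega) (by simpa using hfi)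
      exact ⟨1, ⟨Or.inl rfl, by omega, by omega⟩, by simpa using h3⟩
    · obtain ⟨j, ⟨hadj, _, hjn⟩, hj23⟩ := h.2 (k + i) (by omega) hfi
      refine ⟨j - k, ⟨by omega, by omega, by omega⟩, ?_⟩
      have hjk : k + (j - k) = j := by omega
      simpa [hjk] using hj23

lemma key : ∀ n : ℕ, ∀ F : ℕ → ℕ, PP n F →
    n ≤ ∑ i ∈ Finset.range n, F i ∧
    (∑ i ∈ Finset.range n, F i = n →
      (0 < n → F 0 = 0) ∧ ∀ i < n, F i ≠ 0 → ∃ j, Adj2 n i j ∧ F j = 0) := by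
  intro n
  induction n using Nat.strong_induction_on with
  | _ n IH =>
  intro F hF
  rcases Nat.eq_zero_or_pos n with rfl | hn0
  · simp
  by_cases hF0 : F 0 = 0
  · -- first vertex 0, so F 1 = 3
    have h13 : 1 < n ∧ F 1 = 3 := by
      rcases hF.1 0 hn0 hF0 with ⟨j, ⟨hadj, _, hjn⟩, hj3⟩ |
        ⟨j, l, hne, ⟨ha, _, hj⟩, ⟨hb, _, hl⟩, _, _⟩
      · have hj1 : j = 1 := by omega
        subst hj1; exact ⟨hjn, hj3⟩
      · omega
    obtain ⟨h1n, hF1⟩ := h13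
    by_cases hn2 : n = 2
    · subst hn2
      have hs : ∑ i ∈ Finset.range 2, F i = 3 := by
        simp [Finset.sum_range_succ, hF0, hF1]
      exact ⟨by omega, fun hs2 => absurd hs2 (by omega)⟩
    · have hn3 : 3 ≤ n := by omega
      by_cases hF2 : F 2 = 0
      · -- shift by 3
        have h0 : 3 < n → F 3 = 0 → 4 < n ∧ F 4 = 3 := by
          intro h3n h30
          rcases hF.1 3 h3n h30 with ⟨j, ⟨hadj, _, hjn⟩, hj3⟩ |
            ⟨j, l, hne, ⟨ha, _, hjn⟩, ⟨hb, _, hln⟩, hj2, hl2⟩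
          · have : j = 2 ∨ j = 4 := by omega
            rcases this with rfl | rfl
            · omega
            · exact ⟨hjn, hj3⟩
          · have : j = 2 ∨ l = 2 := by omega
            rcases this with rfl | rfl <;> omega
        have h1 : 3 < n → F 3 = 1 → 4 < n ∧ (F 4 = 2 ∨ F 4 = 3) := by
          intro h3n h31
          obtain ⟨j, ⟨hadj, _, hjn⟩, hj23⟩ := hF.2 3 h3n h31
          have : j = 2 ∨ j = 4 := by omega
          rcases this with rfl | rfl
          · rcases hj23 with h | h <;> omega
          · exact ⟨hjn, hj23⟩
        obtain ⟨hge, heq⟩ := IH (n - 3) (by omega) _ (shiftPP hF 3 (by omega) h0 h1)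
        have hsum : ∑ i ∈ Finset.range n, F i
            = 3 + ∑ i ∈ Finset.range (n - 3), F (3 + i) := by
          rw [sum_split F (show 3 ≤ n by omega)]
          simp [Finset.sum_range_succ, hF0, hF1, hF2]
        constructor
        · omega
        · intro hs
          obtain ⟨hq1, hq2⟩ := heq (by omega)
          refine ⟨fun _ => hF0, ?_⟩
          intro i hin hine
          match i, hine with
          | 0, hine => exact absurd hF0 hine
          | 1, hine => exact ⟨0, ⟨Or.inr rfl, by omega, by omega⟩, hF0⟩
          | 2, hine => exact absurd hF2 hine
          | (m + 3), hine =>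
            obtain ⟨j, ⟨hadj, _, hjn⟩, hj0⟩ :=
              hq2 m (by omega) (by simpa [Nat.add_comm] using hine)
            exact ⟨3 + j, ⟨by omega, by omega, by omega⟩, by simpa using hj0⟩
      · by_cases hF2' : F 2 = 1
        · -- shift by 3; total ≥ n+1
          have h0 : 3 < n → F 3 = 0 → 4 < n ∧ F 4 = 3 := by
            intro h3n h30
            rcases hF.1 3 h3n h30 with ⟨j, ⟨hadj, _, hjn⟩, hj3⟩ |
              ⟨j, l, hne, ⟨ha, _, hjn⟩, ⟨hb, _, hln⟩, hj2, hl2⟩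
            · have : j = 2 ∨ j = 4 := by omega
              rcases this with rfl | rfl
              · omega
              · exact ⟨hjn, hj3⟩
            · have : j = 2 ∨ l = 2 := by omega
              rcases this with rfl | rfl <;> omega
          have h1 : 3 < n → F 3 = 1 → 4 < n ∧ (F 4 = 2 ∨ F 4 = 3) := by
            intro h3n h31
            obtain ⟨j, ⟨hadj, _, hjn⟩, hj23⟩ := hF.2 3 h3n h31
            have : j = 2 ∨ j = 4 := by omega
            rcases this with rfl | rfl
            · rcases hj23 with h | h <;> omega
            · exact ⟨hjn, hj23⟩
          have hge := (IH (n - 3) (by omega) _ (shiftPP hF 3 (by omega) h0 h1)).1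
          have hsum : ∑ i ∈ Finset.range n, F i
              = 4 + ∑ i ∈ Finset.range (n - 3), F (3 + i) := by
            rw [sum_split F (show 3 ≤ n by omega)]
            simp [Finset.sum_range_succ, hF0, hF1, hF2']
          exact ⟨by omega, fun hs => absurd hs (by omega)⟩
        · -- F 2 ≥ 2, shift by 2; total ≥ n+1
          have hge := (IH (n - 2) (by omega) _
            (shiftPP hF 2 (by omega) (fun _ h => absurd h hF2)
              (fun _ h => absurd h hF2'))).1
          have hsum : ∑ i ∈ Finset.range n, F i
              = 3 + ∑ i ∈ Finset.range (n - 2), F (2 + i) := by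
            rw [sum_split F (show 2 ≤ n by omega)]
            simp [Finset.sum_range_succ, hF0, hF1]
          exact ⟨by omega, fun hs => absurd hs (by omega)⟩
  · by_cases hF0' : F 0 = 1
    · -- F 1 ∈ {2,3}, shift by 1
      have h12 : 1 < n ∧ 2 ≤ F 1 ∧ F 1 ≤ 3 := by
        obtain ⟨j, ⟨hadj, _, hjn⟩, hj23⟩ := hF.2 0 hn0 hF0'
        have : j = 1 := by omega
        subst this
        rcases hj23 with h | h <;> exact ⟨hjn, by omega, by omega⟩
      obtain ⟨h1n, hF1a, hF1b⟩ := h12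
      obtain ⟨hge, heq⟩ := IH (n - 1) (by omega) _
        (shiftPP hF 1 (by omega) (fun _ h => absurd h (by omega))
          (fun _ h => absurd h (by omega)))
      have hsum : ∑ i ∈ Finset.range n, F i
          = 1 + ∑ i ∈ Finset.range (n - 1), F (1 + i) := by
        rw [sum_split F (show 1 ≤ n by omega)]
        simp [Finset.sum_range_succ, hF0']
      constructor
      · omega
      · intro hs
        exfalso
        have := (heq (by omega)).1 (by omega)
        simp only [Nat.add_zero] at this
        omega
    · -- F 0 ≥ 2
      have hF0ge : 2 ≤ F 0 := by omega
      by_cases hn1 : n = 1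
      · subst hn1
        have hs : ∑ i ∈ Finset.range 1, F i = F 0 := by simp
        exact ⟨by omega, fun hs2 => absurd hs2 (by omega)⟩
      · have hn2 : 2 ≤ n := by omega
        by_cases hF1 : F 1 = 0
        · -- vertex 1 is 0; shift by 2
          have h0 : 2 < n → F 2 = 0 → 3 < n ∧ F 3 = 3 := by
            intro h2n h20
            rcases hF.1 2 h2n h20 with ⟨j, ⟨hadj, _, hjn⟩, hj3⟩ |
              ⟨j, l, hne, ⟨ha, _, hjn⟩, ⟨hb, _, hln⟩, hj2, hl2⟩
            · have : j = 1 ∨ j = 3 := by omega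
              rcases this with rfl | rfl
              · omega
              · exact ⟨hjn, hj3⟩
            · have : j = 1 ∨ l = 1 := by omega
              rcases this with rfl | rfl <;> omega
          have h1 : 2 < n → F 2 = 1 → 3 < n ∧ (F 3 = 2 ∨ F 3 = 3) := by
            intro h2n h21
            obtain ⟨j, ⟨hadj, _, hjn⟩, hj23⟩ := hF.2 2 h2n h21
            have : j = 1 ∨ j = 3 := by omega
            rcases this with rfl | rfl
            · rcases hj23 with h | h <;> omega
            · exact ⟨hjn, hj23⟩
          obtain ⟨hge, heq⟩ := IH (n - 2) (by omega) _
            (shiftPP hF 2 (by omega) h0 h1)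
          have hsum : ∑ i ∈ Finset.range n, F i
              = F 0 + ∑ i ∈ Finset.range (n - 2), F (2 + i) := by
            rw [sum_split F (show 2 ≤ n by omega)]
            simp [Finset.sum_range_succ, hF1]
          have hor : F 0 = 3 ∨ (2 ≤ F 2 ∧ 2 < n) := by
            rcases hF.1 1 (by omega) hF1 with ⟨j, ⟨hadj, _, hjn⟩, hj3⟩ |
              ⟨j, l, hne, ⟨ha, _, hjn⟩, ⟨hb, _, hln⟩, hj2, hl2⟩
            · have : j = 0 ∨ j = 2 := by omega
              rcases this with rfl | rfl
              · exact Or.inl hj3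
              · exact Or.inr ⟨by omega, hjn⟩
            · have : (j = 0 ∧ l = 2) ∨ (j = 2 ∧ l = 0) := by omega
              rcases this with ⟨rfl, rfl⟩ | ⟨rfl, rfl⟩
              · exact Or.inr ⟨by omega, hln⟩
              · exact Or.inr ⟨by omega, hjn⟩
          constructor
          · omega
          · intro hs
            exfalso
            rcases hor with h3 | ⟨hge2, h2n⟩
            · omega
            · have := (heq (by omega)).1 (by omega)
              simp only [Nat.add_zero] at this
              omega
        · by_cases hF1' : F 1 = 1
          · -- shift by 2, total ≥ n+1
            have h0 : 2 < n → F 2 = 0 → 3 < n ∧ F 3 = 3 := by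
              intro h2n h20
              rcases hF.1 2 h2n h20 with ⟨j, ⟨hadj, _, hjn⟩, hj3⟩ |
                ⟨j, l, hne, ⟨ha, _, hjn⟩, ⟨hb, _, hln⟩, hj2, hl2⟩
              · have : j = 1 ∨ j = 3 := by omega
                rcases this with rfl | rfl
                · omega
                · exact ⟨hjn, hj3⟩
              · have : j = 1 ∨ l = 1 := by omega
                rcases this with rfl | rfl <;> omega
            have h1 : 2 < n → F 2 = 1 → 3 < n ∧ (F 3 = 2 ∨ F 3 = 3) := by
              intro h2n h21
              obtain ⟨j, ⟨hadj, _, hjn⟩, hj23⟩ := hF.2 2 h2n h21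
              have : j = 1 ∨ j = 3 := by omega
              rcases this with rfl | rfl
              · rcases hj23 with h | h <;> omega
              · exact ⟨hjn, hj23⟩
            have hge := (IH (n - 2) (by omega) _
              (shiftPP hF 2 (by omega) h0 h1)).1
            have hsum : ∑ i ∈ Finset.range n, F i
                = F 0 + 1 + ∑ i ∈ Finset.range (n - 2), F (2 + i) := by
              rw [sum_split F (show 2 ≤ n by omega)]
              simp [Finset.sum_range_succ, hF1']
            exact ⟨by omega, fun hs => absurd hs (by omega)⟩
          · -- F 1 ≥ 2, shift by 1, total ≥ n+1
            have hge := (IH (n - 1) (by omega) _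
              (shiftPP hF 1 (by omega) (fun _ h => absurd h hF1)
                (fun _ h => absurd h hF1'))).1
            have hsum : ∑ i ∈ Finset.range n, F i
                = F 0 + ∑ i ∈ Finset.range (n - 1), F (1 + i) := by
              rw [sum_split F (show 1 ≤ n by omega)]
              simp [Finset.sum_range_succ]
            have hF1ge : 2 ≤ F 1 := by omega
            have hF1in : F 1 = F (1 + 0) := by norm_num
            have hmem : F (1 + 0) ≤ ∑ i ∈ Finset.range (n - 1), F (1 + i) := by
              apply Finset.single_le_sum (f := fun i => F (1 + i))
              · intro i _; exact Nat.zero_le _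
              · simp; omega
            exact ⟨by omega, fun hs => absurd hs (by omega)⟩

lemma exists_good : ∀ n : ℕ, 2 ≤ n → ∃ F : ℕ → ℕ, PP n F ∧ (∀ i, F i ≤ 3) ∧
    F 0 ≠ 0 ∧ F 1 ≠ 0 ∧ ∑ i ∈ Finset.range n, F i = n + 1 := by
  intro n
  induction n using Nat.strong_induction_on with
  | _ n IH =>
  intro hn
  by_cases h2 : n = 2
  · subst h2
    refine ⟨fun i => if i = 0 then 1 else if i = 1 then 2 else 0, ⟨?_, ?_⟩, ?_, ?_, ?_, ?_⟩
    · intro i hi h0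
      interval_cases i <;> simp_all
    · intro i hi h1
      interval_cases i
      · exact ⟨1, ⟨Or.inl rfl, by omega, by omega⟩, by norm_num⟩
      · simp_all
    · intro i; dsimp only; repeat' split
      all_goals omega
    · norm_num
    · norm_num
    · simp [Finset.sum_range_succ]
  by_cases h3 : n = 3
  · subst h3
    refine ⟨fun i => if i = 0 then 1 else if i = 1 then 3 else 0, ⟨?_, ?_⟩, ?_, ?_, ?_, ?_⟩
    · intro i hi h0
      interval_cases i
      · simp_all
      · simp_all
      · exact Or.inl ⟨1, ⟨Or.inr rfl, by omega, by omega⟩, by norm_num⟩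
    · intro i hi h1
      interval_cases i
      · exact ⟨1, ⟨Or.inl rfl, by omega, by omega⟩, by norm_num⟩
      · simp_all
      · simp_all
    · intro i; dsimp only; repeat' split
      all_goals omega
    · norm_num
    · norm_num
    · simp [Finset.sum_range_succ]
  by_cases h4 : n = 4
  · subst h4
    refine ⟨fun i => if i = 0 then 1 else if i = 1 then 2 else if i = 2 then 0
        else if i = 3 then 2 else 0, ⟨?_, ?_⟩, ?_, ?_, ?_, ?_⟩
    · intro i hi h0
      interval_cases i
      · simp_all
      · simp_all
      · exact Or.inr ⟨1, 3, by omega, ⟨Or.inr rfl, by omega, by omega⟩,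
          ⟨Or.inl rfl, by omega, by omega⟩, by norm_num, by norm_num⟩
      · simp_all
    · intro i hi h1
      interval_cases i
      · exact ⟨1, ⟨Or.inl rfl, by omega, by omega⟩, by norm_num⟩
      all_goals simp_all
    · intro i; dsimp only; repeat' split
      all_goals omega
    · norm_num
    · norm_num
    · simp [Finset.sum_range_succ]
  · -- n ≥ 5 : take solution for n-3 and append 0,3,0
    have hn5 : 5 ≤ n := by omega
    obtain ⟨F, ⟨hC0, hC1⟩, hbd, hF0, hF1, hsum⟩ := IH (n - 3) (by omega) (by omega)
    set G : ℕ → ℕ := fun i => if i < n - 3 then F i else if i = n - 2 then 3 else 0 with hG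
    have hGval : ∀ i, i < n - 3 → G i = F i := by
      intro i hi; simp [hG, hi]
    have hGn3 : G (n - 3) = 0 := by
      simp only [hG]
      rw [if_neg (by omega), if_neg (by omega)]
    have hGn2 : G (n - 2) = 3 := by
      simp only [hG]
      rw [if_neg (by omega)]; simp
    have hGn1 : G (n - 1) = 0 := by
      simp only [hG]
      rw [if_neg (by omega), if_neg (by omega)]
    refine ⟨G, ⟨?_, ?_⟩, ?_, ?_, ?_, ?_⟩
    · intro i hi h0
      by_cases hilt : i < n - 3
      · rw [hGval i hilt] at h0
        rcases hC0 i hilt h0 with ⟨j, ⟨hadj, _, hjn⟩, hj3⟩ |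
          ⟨j, l, hne, ⟨ha, _, hjn⟩, ⟨hb, _, hln⟩, hj2, hl2⟩
        · exact Or.inl ⟨j, ⟨hadj, by omega, by omega⟩, by rw [hGval j hjn]; exact hj3⟩
        · exact Or.inr ⟨j, l, hne, ⟨ha, by omega, by omega⟩, ⟨hb, by omega, by omega⟩,
            by rw [hGval j hjn]; exact hj2, by rw [hGval l hln]; exact hl2⟩
      · have : i = n - 3 ∨ i = n - 2 ∨ i = n - 1 := by omega
        rcases this with rfl | rfl | rfl
        · exact Or.inl ⟨n - 2, ⟨Or.inl (by omega), by omega, by omega⟩, hGn2⟩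
        · rw [hGn2] at h0; omega
        · exact Or.inl ⟨n - 2, ⟨Or.inr (by omega), by omega, by omega⟩, hGn2⟩
    · intro i hi h1
      by_cases hilt : i < n - 3
      · rw [hGval i hilt] at h1
        obtain ⟨j, ⟨hadj, _, hjn⟩, hj23⟩ := hC1 i hilt h1
        exact ⟨j, ⟨hadj, by omega, by omega⟩, by rw [hGval j hjn]; exact hj23⟩
      · have : i = n - 3 ∨ i = n - 2 ∨ i = n - 1 := by omega
        rcases this with rfl | rfl | rfl
        · rw [hGn3] at h1; omega
        · rw [hGn2] at h1; omega
        · rw [hGn1] at h1; omega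
    · intro i
      by_cases hilt : i < n - 3
      · rw [hGval i hilt]; exact hbd i
      · simp only [hG]
        split
        · omega
        · split <;> omega
    · rw [hGval 0 (by omega)]; exact hF0
    · rw [hGval 1 (by omega)]; exact hF1
    · have hs1 : ∑ i ∈ Finset.range (n - 3), G i = n - 2 := by
        rw [Finset.sum_congr rfl (fun i hi => hGval i (Finset.mem_range.mp hi))]
        rw [hsum]; omega
      have hsplit := sum_split G (show n - 3 ≤ n by omega)
      have h3' : n - (n - 3) = 3 := by omega
      rw [h3'] at hsplit
      have : ∑ i ∈ Finset.range 3, G (n - 3 + i) = 3 := by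
        have e0 : n - 3 + 0 = n - 3 := by omega
        have e1 : n - 3 + 1 = n - 2 := by omega
        have e2 : n - 3 + 2 = n - 1 := by omega
        simp [Finset.sum_range_succ, e0, e1, e2, hGn3, hGn2, hGn1]
      omega

theorem stmt14 (n : ℕ) (hn : 1 ≤ n) :
    mdrdNum (SimpleGraph.pathGraph n) = n + 1 := by
  have hmem : (n + 1) ∈ {w | ∃ f, IsMDRDF (SimpleGraph.pathGraph n) f ∧ ∑ v, f v = w} := by
    by_cases h1 : n = 1
    · subst h1
      refine ⟨fun _ => 2, ⟨⟨fun v => by norm_num, fun v h => by norm_num at h,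
        fun v h => by norm_num at h⟩, ?_⟩, by simp⟩
      intro hdom
      obtain ⟨u, hu, -⟩ := hdom 0 (by simp)
      simp at hu
    · obtain ⟨F, ⟨hC0, hC1⟩, hbd, hF0, hF1, hsum⟩ := exists_good n (by omega)
      refine ⟨fun v => F v.val, ⟨⟨fun v => hbd v.val, ?_, ?_⟩, ?_⟩, ?_⟩
      · intro v h0
        rcases hC0 v.val v.isLt h0 with ⟨j, ⟨hadj, _, hjn⟩, hj3⟩ |
          ⟨j, k, hne, ⟨ha, _, hjn⟩, ⟨hb, _, hkn⟩, hj2, hk2⟩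
        · exact Or.inl ⟨⟨j, hjn⟩, SimpleGraph.pathGraph_adj.mpr hadj, hj3⟩
        · exact Or.inr ⟨⟨j, hjn⟩, ⟨k, hkn⟩, by simpa [Fin.ext_iff] using hne,
            SimpleGraph.pathGraph_adj.mpr ha, SimpleGraph.pathGraph_adj.mpr hb, hj2, hk2⟩
      · intro v h1'
        obtain ⟨j, ⟨hadj, _, hjn⟩, hj23⟩ := hC1 v.val v.isLt h1'
        exact ⟨⟨j, hjn⟩, SimpleGraph.pathGraph_adj.mpr hadj, hj23⟩
      · intro hdom
        obtain ⟨u, hu, hadj⟩ := hdom ⟨0, by omega⟩ hF0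
        have hor := SimpleGraph.pathGraph_adj.mp hadj
        have hv0 : (⟨0, by omega⟩ : Fin n).val = 0 := rfl
        have hu1 : u.val = 1 := by omega
        have : F u.val = 0 := hu
        rw [hu1] at this
        exact hF1 this
      · rw [Fin.sum_univ_eq_sum_range F n]; exact hsum
  have hlb : ∀ w ∈ {w | ∃ f, IsMDRDF (SimpleGraph.pathGraph n) f ∧ ∑ v, f v = w},
      n + 1 ≤ w := by
    rintro w ⟨f, ⟨hdrdf, hmax⟩, rfl⟩
    set F : ℕ → ℕ := fun i => if h : i < n then f ⟨i, h⟩ else 0 with hFdef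
    have hFv : ∀ v : Fin n, F v.val = f v := by
      intro v; simp [hFdef, v.isLt]
    have hPP : PP n F := by
      constructor
      · intro i hi h0
        have h0' : f ⟨i, hi⟩ = 0 := by rw [← hFv ⟨i, hi⟩]; exact h0
        rcases hdrdf.2.1 ⟨i, hi⟩ h0' with ⟨u, hadj, hu3⟩ |
          ⟨u, w', hne, ha, hb, hu2, hw2⟩
        · refine Or.inl ⟨u.val, ⟨?_, hi, u.isLt⟩, by rw [hFv u]; exact hu3⟩
          exact SimpleGraph.pathGraph_adj.mp hadj
        · refine Or.inr ⟨u.val, w'.val, fun h => hne (Fin.val_injective h),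
            ⟨?_, hi, u.isLt⟩, ⟨?_, hi, w'.isLt⟩,
            by rw [hFv u]; exact hu2, by rw [hFv w']; exact hw2⟩
          · exact SimpleGraph.pathGraph_adj.mp ha
          · exact SimpleGraph.pathGraph_adj.mp hb
      · intro i hi h1'
        have h1'' : f ⟨i, hi⟩ = 1 := by rw [← hFv ⟨i, hi⟩]; exact h1'
        obtain ⟨u, hadj, hu23⟩ := hdrdf.2.2 ⟨i, hi⟩ h1''
        refine ⟨u.val, ⟨?_, hi, u.isLt⟩, by rw [hFv u]; exact hu23⟩
        exact SimpleGraph.pathGraph_adj.mp hadj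
    have hsum : ∑ v, f v = ∑ i ∈ Finset.range n, F i := by
      rw [← Fin.sum_univ_eq_sum_range F n]
      exact Finset.sum_congr rfl (fun v _ => (hFv v).symm)
    obtain ⟨hge, heq⟩ := key n F hPP
    by_cases hcase : ∑ v, f v = n
    · exfalso
      obtain ⟨-, hq2⟩ := heq (by omega)
      apply hmax
      intro v hv
      have hvne : F v.val ≠ 0 := by rw [hFv v]; exact hv
      obtain ⟨j, ⟨hadj, _, hjn⟩, hj0⟩ := hq2 v.val v.isLt hvne
      refine ⟨⟨j, hjn⟩, ?_, SimpleGraph.pathGraph_adj.mpr hadj⟩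
      show f ⟨j, hjn⟩ = 0
      rw [← hFv ⟨j, hjn⟩]; exact hj0
    · omega
  exact le_antisymm (Nat.sInf_le hmem) (le_csInf ⟨n + 1, hmem⟩ hlb)
end

section
/- For the cycle C_n on n ≥ 3 vertices, γ_dR^m(C_n) = n + 1. -/
open Finset

/-! A discharging argument gives the lower bound on any graph of maximum degree at most `2`.
Each vertex starts with charge `2 f v`; a vertex labelled `3` (resp. `2`) sends `2` (resp. `1`) to
each neighbour labelled `0`. Afterwards every vertex holds at least `2`, and a vertex `v` with
`f v ≠ 0` and no `0`-neighbour (which exists as the `0`-set is not dominating) or, if `f v = 1`,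
its neighbour labelled `2` or `3`, holds at least `3`. Hence `2 ∑ f ≥ 2 n + 1`. The labelling
`1 2 0 2 … 0 2` (or `1 1 2 0 2 … 0 2`) attains `n + 1`. -/

section Discharging

variable {V : Type*} [Fintype V] {G : SimpleGraph V} [DecidableRel G.Adj]

theorem SimpleGraph.sum_sum_neighborFinset_swap {M : Type*} [AddCommMonoid M] (g : V → V → M) :
    ∑ v, ∑ u ∈ G.neighborFinset v, g v u = ∑ v, ∑ u ∈ G.neighborFinset v, g u v := by
  simp only [SimpleGraph.neighborFinset_eq_filter, Finset.sum_filter]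
  rw [Finset.sum_comm]
  simp only [G.adj_comm]

def drTransfer : ℕ → ℕ
  | 2 => 1
  | 3 => 2
  | _ => 0

variable (G) in
def drReceived (f : V → ℕ) (v : V) : ℕ :=
  ∑ u ∈ G.neighborFinset v, if f v = 0 then drTransfer (f u) else 0

variable (G) in
def drSent (f : V → ℕ) (v : V) : ℕ :=
  ∑ u ∈ G.neighborFinset v, if f u = 0 then drTransfer (f v) else 0

theorem sum_drReceived_eq_sum_drSent (f : V → ℕ) :
    ∑ v, drReceived G f v = ∑ v, drSent G f v :=
  G.sum_sum_neighborFinset_swap _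

theorem drSent_eq (f : V → ℕ) (v : V) :
    drSent G f v = drTransfer (f v) * #{u ∈ G.neighborFinset v | f u = 0} := by
  rw [drSent, ← Finset.sum_filter, Finset.sum_const, smul_eq_mul, mul_comm]

theorem two_add_drTransfer_mul_le {k z : ℕ} (hk : 1 ≤ k) (hk3 : k ≤ 3) (hz : z ≤ 2) :
    2 + drTransfer k * z ≤ 2 * k := by
  interval_cases k <;> simp only [drTransfer] <;> omega

theorem two_add_drTransfer_mul_lt {k z : ℕ} (hk : 2 ≤ k) (hk3 : k ≤ 3) (hz : z ≤ 1) :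
    2 + drTransfer k * z < 2 * k := by
  interval_cases k <;> simp only [drTransfer] <;> omega

theorem IsDRDF.two_le_drReceived {f : V → ℕ} (hf : IsDRDF G f) {v : V} (hv : f v = 0) :
    2 ≤ drReceived G f v := by
  classical
  simp only [drReceived, hv, if_true]
  rcases hf.2.1 v hv with ⟨u, hadj, hu⟩ | ⟨u, w, huw, hadju, hadjw, hu, hw⟩
  · calc 2 = drTransfer (f u) := by rw [hu]; rfl
      _ ≤ ∑ x ∈ G.neighborFinset v, drTransfer (f x) :=
        Finset.single_le_sum (f := fun x => drTransfer (f x)) (fun _ _ => Nat.zero_le _)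
          ((G.mem_neighborFinset v u).2 hadj)
  · calc 2 = ∑ x ∈ {u, w}, drTransfer (f x) := by rw [Finset.sum_pair huw, hu, hw]; rfl
      _ ≤ ∑ x ∈ G.neighborFinset v, drTransfer (f x) := by
        refine Finset.sum_le_sum_of_subset (Finset.insert_subset_iff.2 ⟨?_, ?_⟩)
        · exact (G.mem_neighborFinset v u).2 hadju
        · exact Finset.singleton_subset_iff.2 ((G.mem_neighborFinset v w).2 hadjw)

theorem IsDRDF.two_add_drSent_le {f : V → ℕ} (hf : IsDRDF G f) {v : V}
    (hdeg : G.degree v ≤ 2) :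
    2 + drSent G f v ≤ 2 * f v + drReceived G f v := by
  rcases Nat.eq_zero_or_pos (f v) with hv | hv
  · have : drSent G f v = 0 := by rw [drSent_eq, hv]; simp [drTransfer]
    have := hf.two_le_drReceived hv
    omega
  · have := two_add_drTransfer_mul_le hv (hf.1 v) ((Finset.card_filter_le _ (f · = 0)).trans hdeg)
    rw [drSent_eq]
    omega

theorem IsMDRDF.exists_two_add_drSent_lt {f : V → ℕ} (hf : IsMDRDF G f)
    (hdeg : ∀ v, G.degree v ≤ 2) : ∃ v, 2 + drSent G f v < 2 * f v + drReceived G f v := by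
  obtain ⟨⟨hle, -, hone⟩, hdom⟩ := hf
  simp only [IsDomSet, Set.mem_ofPred_eq, not_forall, not_exists, not_and] at hdom
  obtain ⟨v, hv, hvz⟩ := hdom
  have hexcess : ∀ w, f w ≠ 0 →
      2 + drTransfer (f w) * #{u ∈ G.neighborFinset w | f u = 0} < 2 * f w →
      2 + drSent G f w < 2 * f w + drReceived G f w := by
    intro w _ h; rw [drSent_eq]; omega
  rcases Nat.lt_or_ge (f v) 2 with hv1 | hv2
  · obtain ⟨u, hadj, hu⟩ := hone v (by omega)
    refine ⟨u, hexcess u (by omega) (two_add_drTransfer_mul_lt (by omega) (hle u) ?_)⟩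
    have hssub : {x ∈ G.neighborFinset u | f x = 0} ⊂ G.neighborFinset u :=
      Finset.filter_ssubset.2 ⟨v, (G.mem_neighborFinset u v).2 hadj.symm, hv⟩
    have := Finset.card_lt_card hssub
    rw [SimpleGraph.card_neighborFinset_eq_degree] at this
    have := hdeg u
    omega
  · refine ⟨v, hexcess v hv ?_⟩
    have : #{u ∈ G.neighborFinset v | f u = 0} = 0 := by
      rw [Finset.card_eq_zero, Finset.filter_eq_empty_iff]
      exact fun u hu hu0 => hvz u hu0 ((G.mem_neighborFinset v u).1 hu)
    rw [this]
    omega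

theorem IsMDRDF.card_add_one_le_sum {f : V → ℕ} (hf : IsMDRDF G f)
    (hdeg : ∀ v, G.degree v ≤ 2) : Fintype.card V + 1 ≤ ∑ v, f v := by
  have hlt : ∑ v, (2 + drSent G f v) < ∑ v, (2 * f v + drReceived G f v) :=
    Finset.sum_lt_sum (fun v _ => hf.1.two_add_drSent_le (hdeg v))
      (by simpa using hf.exists_two_add_drSent_lt hdeg)
  simp only [Finset.sum_add_distrib, ← Finset.mul_sum, sum_drReceived_eq_sum_drSent,
    Finset.sum_const, Finset.card_univ, smul_eq_mul] at hlt
  omega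

end Discharging

theorem mdrdNum_eq {V : Type*} [Fintype V] {G : SimpleGraph V} {w : ℕ}
    (hex : ∃ f, IsMDRDF G f ∧ ∑ v, f v = w) (hle : ∀ f, IsMDRDF G f → w ≤ ∑ v, f v) :
    mdrdNum G = w := by
  have hmem : w ∈ {w | ∃ f, IsMDRDF G f ∧ ∑ v, f v = w} := hex
  refine le_antisymm (Nat.sInf_le hmem) ?_
  obtain ⟨f, hf, hfw⟩ := Nat.sInf_mem ⟨w, hmem⟩
  exact (hle f hf).trans_eq hfw

theorem SimpleGraph.cycleGraph_adj_iff_val {n : ℕ} (hn : 2 ≤ n) {i j : Fin n} :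
    (SimpleGraph.cycleGraph n).Adj i j ↔
      i.val + 1 = j.val ∨ j.val + 1 = i.val ∨ (i.val = 0 ∧ j.val + 1 = n) ∨
        (j.val = 0 ∧ i.val + 1 = n) := by
  rw [SimpleGraph.cycleGraph_adj']
  rcases lt_trichotomy i j with h | rfl | h
  · rw [Fin.coe_sub_iff_lt.2 h, Fin.coe_sub_iff_le.2 h.le]
    rw [Fin.lt_def] at h
    omega
  · rw [Fin.coe_sub_iff_le.2 le_rfl]
    omega
  · rw [Fin.coe_sub_iff_le.2 h.le, Fin.coe_sub_iff_lt.2 h]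
    rw [Fin.lt_def] at h
    omega

/-- On `C_n` with `p = n % 2` this is the labelling `1 2 0 2 0 … 2` (`n` even) or
`1 1 2 0 2 … 2` (`n` odd). -/
def cyclePattern (p i : ℕ) : ℕ :=
  if i ≤ p then 1 else if i % 2 = p then 0 else 2

theorem cyclePattern_eq_zero_iff {p i : ℕ} : cyclePattern p i = 0 ↔ p < i ∧ i % 2 = p := by
  unfold cyclePattern; grind

theorem cyclePattern_eq_two_iff {p i : ℕ} : cyclePattern p i = 2 ↔ p < i ∧ i % 2 ≠ p := by
  unfold cyclePattern; grind

theorem cyclePattern_eq_one_iff {p i : ℕ} : cyclePattern p i = 1 ↔ i ≤ p := by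
  unfold cyclePattern; grind

theorem cyclePattern_le_two (p i : ℕ) : cyclePattern p i ≤ 2 := by
  unfold cyclePattern; split_ifs <;> omega

theorem sum_range_cyclePattern {p : ℕ} (hp : p < 2) (k : ℕ) :
    ∑ i ∈ range (2 * k + 2 + p), cyclePattern p i = 2 * k + 3 + p := by
  induction k with
  | zero => interval_cases p <;> decide
  | succ k ih =>
    rw [show 2 * (k + 1) + 2 + p = 2 * k + 2 + p + 1 + 1 by ring, sum_range_succ, sum_range_succ,
      ih, show cyclePattern p (2 * k + 2 + p) = 0 from cyclePattern_eq_zero_iff.2 (by omega),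
      show cyclePattern p (2 * k + 2 + p + 1) = 2 from cyclePattern_eq_two_iff.2 (by omega)]
    ring

theorem sum_cyclePattern {n : ℕ} (hn : 2 ≤ n) :
    ∑ i : Fin n, cyclePattern (n % 2) i = n + 1 := by
  obtain ⟨k, hk⟩ : ∃ k, n = 2 * k + 2 + n % 2 := ⟨(n - 2) / 2, by omega⟩
  have := sum_range_cyclePattern (Nat.mod_lt n two_pos) k
  rw [← hk] at this
  rw [Fin.sum_univ_eq_sum_range (cyclePattern (n % 2)), this]
  omega

theorem isMDRDF_cyclePattern {n : ℕ} (hn : 3 ≤ n) :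
    IsMDRDF (SimpleGraph.cycleGraph n) (fun i => cyclePattern (n % 2) i) := by
  have hadj := fun {i j : Fin n} => SimpleGraph.cycleGraph_adj_iff_val (i := i) (j := j) (by omega)
  refine ⟨⟨fun i => (cyclePattern_le_two _ _).trans (by norm_num), fun i hi => ?_,
    fun i hi => ?_⟩, fun hdom => ?_⟩
  · rw [cyclePattern_eq_zero_iff] at hi
    refine Or.inr ⟨⟨i - 1, by omega⟩, ⟨i + 1, by omega⟩,
      Fin.ne_of_val_ne (by simp only; omega), hadj.2 (by simp only; omega), hadj.2 (Or.inl rfl),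
      cyclePattern_eq_two_iff.2 (by simp only; omega),
      cyclePattern_eq_two_iff.2 (by simp only; omega)⟩
  · rw [cyclePattern_eq_one_iff] at hi
    rcases Nat.eq_zero_or_pos i.val with h0 | hpos
    · exact ⟨⟨n - 1, by omega⟩, hadj.2 (by simp only; omega),
        Or.inl (cyclePattern_eq_two_iff.2 (by simp only; omega))⟩
    · exact ⟨⟨2, by omega⟩, hadj.2 (by simp only; omega),
        Or.inl (cyclePattern_eq_two_iff.2 (by simp only; omega))⟩
  · obtain ⟨u, hu, hu0⟩ := hdom ⟨0, by omega⟩ (by simp [cyclePattern_eq_zero_iff])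
    rw [Set.mem_ofPred_eq, cyclePattern_eq_zero_iff] at hu
    rw [hadj] at hu0
    simp only at hu0
    omega

theorem stmt15 (n : ℕ) (hn : 3 ≤ n) :
    mdrdNum (SimpleGraph.cycleGraph n) = n + 1 := by
  obtain ⟨m, rfl⟩ : ∃ m, n = m + 3 := ⟨n - 3, by omega⟩
  refine mdrdNum_eq ⟨_, isMDRDF_cyclePattern hn, sum_cyclePattern (by omega)⟩ fun f hf => ?_
  simpa using hf.card_add_one_le_sum fun v => SimpleGraph.cycleGraph_degree_three_le.le
end

section
/- For the complete graph K_n with n ≥ 2, γ_dR^m(K_n) = n + 1. -/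
open Finset

theorem stmt16 (n : ℕ) (hn : 2 ≤ n) :
    mdrdNum (⊤ : SimpleGraph (Fin n)) = n + 1 := by
  have hpos : 0 < n := by omega
  have z : Fin n := ⟨0, hpos⟩
  have hmem : n + 1 ∈ {w | ∃ f, IsMDRDF (⊤ : SimpleGraph (Fin n)) f ∧ ∑ v, f v = w} := by
    refine ⟨fun v => if v = z then 2 else 1, ⟨⟨?_, ?_, ?_⟩, ?_⟩, ?_⟩
    · intro v; dsimp only; split <;> omega
    · intro v hv; dsimp only at hv; split at hv <;> omega
    · intro v hv
      have hvz : v ≠ z := by intro h; simp [h] at hv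
      exact ⟨z, by simpa [SimpleGraph.top_adj] using hvz, by simp⟩
    · intro hd
      obtain ⟨u, hu, -⟩ := hd z (by simp)
      simp only [Set.mem_setOf_eq] at hu
      split at hu <;> omega
    · have : (fun v => if v = z then 2 else 1) = fun v : Fin n => 1 + (if v = z then 1 else 0) := by
        funext v; split <;> rfl
      rw [this, Finset.sum_add_distrib]
      simp [Finset.sum_ite_eq']
  refine le_antisymm (Nat.sInf_le hmem) (le_csInf ⟨_, hmem⟩ ?_)
  rintro w ⟨f, ⟨⟨h3, h0, h1⟩, hnd⟩, rfl⟩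
  -- 0-set is empty
  have hpos1 : ∀ v, 1 ≤ f v := by
    intro v
    by_contra h
    have hv0 : f v = 0 := by omega
    apply hnd
    intro u hu
    refine ⟨v, hv0, ?_⟩
    simp only [Set.mem_setOf_eq] at hu
    simp [SimpleGraph.top_adj]
    intro h; exact hu (h ▸ hv0)
  -- some vertex has value ≥ 2
  have h2 : ∃ v, 2 ≤ f v := by
    by_contra h
    push_neg at h
    have hfz : f z = 1 := by have := hpos1 z; have := h z; omega
    obtain ⟨u, -, hu⟩ := h1 z hfz
    have := h u; omega
  obtain ⟨v, hv⟩ := h2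
  calc n + 1 = ∑ w : Fin n, (if w = v then 2 else 1) := by
        have : (fun w => if w = v then 2 else 1) = fun w : Fin n => 1 + (if w = v then 1 else 0) := by
          funext w; split <;> rfl
        rw [this, Finset.sum_add_distrib]
        simp [Finset.sum_ite_eq']
    _ ≤ ∑ w, f w := by
        apply Finset.sum_le_sum
        intro w _
        split
        · next h => exact h ▸ hv
        · exact hpos1 w
end

section
/- For the star K_{1,n−1} with n ≥ 4, γ_dR^m(K_{1,n−1}) = 4. -/
open Finset

lemma star_adj_right {m : ℕ} (i : Fin m) (u : Fin 1 ⊕ Fin m)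
    (h : (completeBipartiteGraph (Fin 1) (Fin m)).Adj (Sum.inr i) u) : u = Sum.inl 0 := by
  cases u with
  | inl x => exact congrArg Sum.inl (Subsingleton.elim x 0)
  | inr j => simp at h

lemma star_lower (n : ℕ) (hn : 4 ≤ n) (f : Fin 1 ⊕ Fin (n - 1) → ℕ)
    (hf : IsMDRDF (completeBipartiteGraph (Fin 1) (Fin (n - 1))) f) : 4 ≤ ∑ v, f v := by
  obtain ⟨⟨hb, h0, h1⟩, hnd⟩ := hf
  have key := @star_adj_right (n - 1)
  by_cases h3 : f (Sum.inl 0) = 3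
  · have hex : ∃ i : Fin (n - 1), f (Sum.inr i) ≠ 0 := by
      by_contra hall
      push_neg at hall
      apply hnd
      intro v hv
      match v with
      | Sum.inl x =>
        exact ⟨Sum.inr ⟨0, by omega⟩, hall _, by simp⟩
      | Sum.inr i => exact absurd (hall i) hv
    obtain ⟨i, hi⟩ := hex
    have hs := Finset.sum_le_sum_of_subset
      (Finset.subset_univ ({Sum.inl 0, Sum.inr i} : Finset (Fin 1 ⊕ Fin (n - 1)))) (f := f)
    rw [Finset.sum_pair (by simp)] at hs
    omega
  · have hleaf : ∀ i : Fin (n - 1), f (Sum.inr i) ≠ 0 := by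
      intro i hi0
      rcases h0 _ hi0 with ⟨u, hu, hu3⟩ | ⟨u, w, huw, hu, hw, _, _⟩
      · rw [key i u hu] at hu3; exact h3 hu3
      · exact huw ((key i u hu).trans (key i w hw).symm)
    by_cases h0c : f (Sum.inl 0) = 0
    · have h2 : ∀ i : Fin (n - 1), 2 ≤ f (Sum.inr i) := by
        intro i
        rcases Nat.lt_or_ge (f (Sum.inr i)) 2 with h | h
        · have h1' : f (Sum.inr i) = 1 := by have := hleaf i; omega
          obtain ⟨u, hu, hor⟩ := h1 _ h1'
          rw [key i u hu] at hor
          omega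
        · exact h
      have hs := Finset.sum_le_sum_of_subset
        (Finset.subset_univ ({Sum.inr ⟨0, by omega⟩, Sum.inr ⟨1, by omega⟩} :
          Finset (Fin 1 ⊕ Fin (n - 1)))) (f := f)
      rw [Finset.sum_pair (by simp [Fin.ext_iff])] at hs
      have ha := h2 ⟨0, by omega⟩
      have hb' := h2 ⟨1, by omega⟩
      omega
    · have hs := Finset.sum_le_sum_of_subset
        (Finset.subset_univ ({Sum.inl 0, Sum.inr ⟨0, by omega⟩, Sum.inr ⟨1, by omega⟩,
          Sum.inr ⟨2, by omega⟩} : Finset (Fin 1 ⊕ Fin (n - 1)))) (f := f)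
      rw [Finset.sum_insert (by simp), Finset.sum_insert (by simp [Fin.ext_iff]),
        Finset.sum_pair (by simp [Fin.ext_iff])] at hs
      have ha := hleaf ⟨0, by omega⟩
      have hb' := hleaf ⟨1, by omega⟩
      have hc' := hleaf ⟨2, by omega⟩
      omega

theorem stmt17 (n : ℕ) (hn : 4 ≤ n) :
    mdrdNum (completeBipartiteGraph (Fin 1) (Fin (n - 1))) = 4 := by
  have hm : 0 < n - 1 := by omega
  set g : Fin 1 ⊕ Fin (n - 1) → ℕ :=
    Sum.elim (fun _ => 3) (fun i => if i.val = 0 then 1 else 0) with hg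
  have hmem : (4 : ℕ) ∈ {w | ∃ f, IsMDRDF (completeBipartiteGraph (Fin 1) (Fin (n - 1))) f ∧
      ∑ v, f v = w} := by
    refine ⟨g, ⟨⟨?_, ?_, ?_⟩, ?_⟩, ?_⟩
    · intro v
      cases v with
      | inl x => simp [hg]
      | inr i => simp only [hg, Sum.elim_inr]; split <;> omega
    · intro v hv
      cases v with
      | inl x => simp [hg] at hv
      | inr i => exact Or.inl ⟨Sum.inl 0, by simp, rfl⟩
    · intro v hv
      cases v with
      | inl x => simp [hg] at hv
      | inr i => exact ⟨Sum.inl 0, by simp, Or.inr rfl⟩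
    · intro hd
      obtain ⟨u, hu, hadj⟩ := hd (Sum.inr ⟨0, hm⟩) (by simp [hg])
      rw [star_adj_right _ u hadj] at hu
      simp [hg] at hu
    · rw [hg, Fintype.sum_sum_type]
      simp only [Sum.elim_inl, Sum.elim_inr]
      rw [Fin.sum_univ_eq_sum_range (fun i => if i = 0 then 1 else 0) (n - 1)]
      rw [Finset.sum_ite_eq' (Finset.range (n - 1)) 0 (fun _ => 1)]
      simp [hm]
  refine le_antisymm (Nat.sInf_le hmem) ?_
  have hne : {w | ∃ f, IsMDRDF (completeBipartiteGraph (Fin 1) (Fin (n - 1))) f ∧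
      ∑ v, f v = w}.Nonempty := ⟨4, hmem⟩
  obtain ⟨f, hf, hsum⟩ := Nat.sInf_mem hne
  rw [mdrdNum]
  calc 4 ≤ ∑ v, f v := star_lower n hn f hf
  _ = _ := hsum
end

section
/- For the path P_n with n ≡ 0 (mod 3) and n ≥ 3, the function assigning 3 to vertices v_{3i+2} for 0 ≤ i ≤ (n−3)/3 and 0 to all other vertices is a double Roman dominating function of P_n of weight n, achieving γ_dR(P_n) = n. -/
open Finset

private def cval {n : ℕ} (f : Fin n → ℕ) (j : Fin n) : ℕ :=
  if f j = 3 then 2 else if f j = 2 then 1 else 0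

private def gpay {n : ℕ} (f : Fin n → ℕ) (i j : Fin n) : ℕ :=
  if i = j then (if f j = 0 then 0 else 2)
  else if (i.val + 1 = j.val ∨ j.val + 1 = i.val) then cval f j else 0

private lemma gpay_adj {n : ℕ} (f : Fin n → ℕ) {i j : Fin n}
    (h : (SimpleGraph.pathGraph n).Adj i j) : gpay f i j = cval f j := by
  have h' := (SimpleGraph.pathGraph_adj).1 h
  simp [gpay, h.ne, h']

private lemma row_lb {n : ℕ} (f : Fin n → ℕ)
    (hf : (∀ v, f v ≤ 3) ∧
      (∀ v, f v = 0 → (∃ u, (SimpleGraph.pathGraph n).Adj v u ∧ f u = 3) ∨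
        ∃ u w, u ≠ w ∧ (SimpleGraph.pathGraph n).Adj v u ∧ (SimpleGraph.pathGraph n).Adj v w ∧ f u = 2 ∧ f w = 2) ∧
      (∀ v, f v = 1 → ∃ u, (SimpleGraph.pathGraph n).Adj v u ∧ (f u = 2 ∨ f u = 3)))
    (i : Fin n) : 2 ≤ ∑ j, gpay f i j := by
  by_cases hfi : f i = 0
  · rcases hf.2.1 i hfi with ⟨u, hadj, hu3⟩ | ⟨u, w, huw, hau, haw, hu2, hw2⟩
    · have hgu : gpay f i u = 2 := by rw [gpay_adj f hadj]; simp [cval, hu3]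
      calc 2 = gpay f i u := hgu.symm
        _ ≤ ∑ j, gpay f i j :=
          Finset.single_le_sum (fun _ _ => Nat.zero_le _) (mem_univ u)
    · have hgu : gpay f i u = 1 := by rw [gpay_adj f hau]; simp [cval, hu2]
      have hgw : gpay f i w = 1 := by rw [gpay_adj f haw]; simp [cval, hw2]
      have hpair : ∑ j ∈ ({u, w} : Finset (Fin n)), gpay f i j = 2 := by
        rw [Finset.sum_pair huw, hgu, hgw]
      calc 2 = ∑ j ∈ ({u, w} : Finset (Fin n)), gpay f i j := hpair.symm
        _ ≤ ∑ j, gpay f i j :=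
          Finset.sum_le_sum_of_subset (Finset.subset_univ _)
  · have hgi : gpay f i i = 2 := by simp [gpay, hfi]
    calc 2 = gpay f i i := hgi.symm
      _ ≤ ∑ j, gpay f i j :=
        Finset.single_le_sum (fun _ _ => Nat.zero_le _) (mem_univ i)

private lemma col_ub {n : ℕ} (f : Fin n → ℕ) (hle : ∀ v, f v ≤ 3) (j : Fin n) :
    ∑ i, gpay f i j ≤ 2 * f j := by
  have hsplit : ∑ i, gpay f i j = gpay f j j + ∑ i ∈ univ.erase j, gpay f i j :=
    (Finset.add_sum_erase univ _ (mem_univ j)).symm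
  have herase : ∑ i ∈ univ.erase j, gpay f i j =
      ∑ i ∈ (univ.erase j).filter (fun i : Fin n => i.val + 1 = j.val ∨ j.val + 1 = i.val),
        cval f j := by
    rw [Finset.sum_filter]
    apply Finset.sum_congr rfl
    intro i hi
    have hij : i ≠ j := Finset.ne_of_mem_erase hi
    simp [gpay, hij]
  have hcard :
      ((univ.erase j).filter (fun i : Fin n => i.val + 1 = j.val ∨ j.val + 1 = i.val)).card
        ≤ 2 := by
    have : ((univ.erase j).filter
        (fun i : Fin n => i.val + 1 = j.val ∨ j.val + 1 = i.val)).card ≤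
        (Finset.univ : Finset Bool).card := by
      apply Finset.card_le_card_of_injOn (fun i => decide (i.val = j.val + 1))
      · intro _ _; exact Finset.mem_univ _
      · intro a ha b hb hab
        simp only [Finset.coe_filter, Set.mem_setOf_eq] at ha hb
        have ha' := ha.2
        have hb' := hb.2
        have hval : a.val = b.val := by
          by_cases h : a.val = j.val + 1
          · have hb2 : b.val = j.val + 1 := by
              by_contra hb3
              simp [h, hb3] at hab
            omega
          · have hb2 : ¬ b.val = j.val + 1 := by
              by_contra hb3
              simp [h, hb3] at hab
            omega
        exact Fin.ext hval
    simpa using this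
  have hsum : ∑ i ∈ (univ.erase j).filter
        (fun i : Fin n => i.val + 1 = j.val ∨ j.val + 1 = i.val), cval f j
      ≤ 2 * cval f j := by
    rw [Finset.sum_const, smul_eq_mul]
    exact Nat.mul_le_mul_right _ hcard
  have h3 := hle j
  rw [hsplit, herase]
  have hmain : gpay f j j + 2 * cval f j ≤ 2 * f j := by
    interval_cases h : f j <;> simp [gpay, cval, h]
  omega

lemma drdf_lb {n : ℕ} (f : Fin n → ℕ)
    (hf : (∀ v, f v ≤ 3) ∧
      (∀ v, f v = 0 → (∃ u, (SimpleGraph.pathGraph n).Adj v u ∧ f u = 3) ∨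
        ∃ u w, u ≠ w ∧ (SimpleGraph.pathGraph n).Adj v u ∧ (SimpleGraph.pathGraph n).Adj v w ∧ f u = 2 ∧ f w = 2) ∧
      (∀ v, f v = 1 → ∃ u, (SimpleGraph.pathGraph n).Adj v u ∧ (f u = 2 ∨ f u = 3)))
    : n ≤ ∑ v, f v := by
  have h1 : 2 * n ≤ ∑ i : Fin n, ∑ j, gpay f i j := by
    calc 2 * n = ∑ _i : Fin n, 2 := by simp [mul_comm]
      _ ≤ _ := Finset.sum_le_sum (fun i _ => row_lb f hf i)
  have h2 : ∑ i : Fin n, ∑ j, gpay f i j = ∑ j : Fin n, ∑ i, gpay f i j :=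
    Finset.sum_comm
  have h3 : ∑ j : Fin n, ∑ i, gpay f i j ≤ 2 * ∑ v, f v := by
    rw [Finset.mul_sum]
    exact Finset.sum_le_sum (fun j _ => col_ub f hf.1 j)
  omega


private lemma sum_pattern (m : ℕ) :
    (∑ v ∈ Finset.range (3 * m), (if v % 3 = 1 then 3 else 0)) = 3 * m := by
  induction m with
  | zero => simp
  | succ m ih =>
      have h : 3 * (m + 1) = (3 * m + 1) + 1 + 1 := by ring
      rw [h, Finset.sum_range_succ, Finset.sum_range_succ, Finset.sum_range_succ, ih]
      have h0 : (3 * m) % 3 = 0 := by omega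
      have h1 : (3 * m + 1) % 3 = 1 := by omega
      have h2 : (3 * m + 1 + 1) % 3 = 2 := by omega
      simp [h0, h1, h2]


theorem stmt19 (n : ℕ) (hn : 3 ≤ n) (hmod : n % 3 = 0) :
    IsDRDF (SimpleGraph.pathGraph n) (fun v : Fin n => if v.val % 3 = 1 then 3 else 0) ∧
    (∑ v : Fin n, (if v.val % 3 = 1 then 3 else 0)) = n ∧
    drdNum (SimpleGraph.pathGraph n) = n := by
  set f0 : Fin n → ℕ := fun v : Fin n => if v.val % 3 = 1 then 3 else 0 with hf0
  have hdrdf : IsDRDF (SimpleGraph.pathGraph n) f0 := by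
    refine ⟨fun v => ?_, fun v hv => ?_, fun v hv => ?_⟩
    · simp only [hf0]; split <;> omega
    · left
      have hv' : ¬ v.val % 3 = 1 := by
        intro h; simp [hf0, h] at hv
      by_cases h0 : v.val % 3 = 0
      · have hlt : v.val + 1 < n := by omega
        refine ⟨⟨v.val + 1, hlt⟩, ?_, ?_⟩
        · exact SimpleGraph.pathGraph_adj.2 (Or.inl rfl)
        · have : (v.val + 1) % 3 = 1 := by omega
          simp [hf0, this]
      · have h2 : v.val % 3 = 2 := by omega
        have hge : 1 ≤ v.val := by omega
        refine ⟨⟨v.val - 1, by omega⟩, ?_, ?_⟩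
        · exact SimpleGraph.pathGraph_adj.2 (Or.inr (by simp; omega))
        · have : (v.val - 1) % 3 = 1 := by omega
          simp [hf0, this]
    · exfalso
      simp only [hf0] at hv
      split at hv <;> omega
  have hsum : (∑ v : Fin n, f0 v) = n := by
    have := Fin.sum_univ_eq_sum_range (fun v => if v % 3 = 1 then 3 else 0) n
    have hn3 : n = 3 * (n / 3) := by omega
    calc (∑ v : Fin n, f0 v)
        = ∑ v ∈ Finset.range n, (if v % 3 = 1 then 3 else 0) := this
      _ = ∑ v ∈ Finset.range (3 * (n / 3)), (if v % 3 = 1 then 3 else 0) := by rw [← hn3]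
      _ = 3 * (n / 3) := sum_pattern _
      _ = n := hn3.symm
  refine ⟨hdrdf, hsum, ?_⟩
  have hmem : n ∈ {w | ∃ f, IsDRDF (SimpleGraph.pathGraph n) f ∧ ∑ v, f v = w} :=
    ⟨f0, hdrdf, hsum⟩
  apply le_antisymm
  · exact Nat.sInf_le hmem
  · apply le_csInf ⟨n, hmem⟩
    rintro w ⟨f, hf, rfl⟩
    exact drdf_lb f hf
end
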